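/- arXiv:2312.08297 — 3 statements merged into one kernel-verified Lean document; each statement's English description precedes it below -/
import Mathlib

section
/- Let (X,d,m) be a compact Ahlfors Q-regular space and let 0 < s < 1. For x, w ∈ X and y > 0 define S(x,w,y) := Σ_{j∈ℤ} Σ_{k=0}^∞ 2^{−[(Q+1)k + Q·s·j]} · m( B_d(x,2^j) ∩ B_d(w, 2^k y) ). Then there exist constants 0 < c1 ≤ c2 < ∞, depending only on X, Q and s, such that for all x, w ∈ X and all y > 0: c1 · S(w,x,y) ≤ S(x,w,y) ≤ c2 · S(w,x,y). -/
/-!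
On a compact Ahlfors-regular space any two balls of the same radius have comparable measure.
Hence, if `r ≤ R` and `B(u,r)` meets `B(v,R)`, then `m(B(u,r) ∩ B(v,R)) ≤ m(B(u,r)) ≲ m(B(v,r))`,
and `B(v,r) ⊆ B(v,4r) ∩ B(u,4R)`. Applied termwise to `S(x,w,y)`, this bounds each term by a
fixed multiple of the term of `S(w,x,y)` with both indices `j` and `k` raised by `2`.
-/

noncomputable section

open MeasureTheory ENNReal NNReal

/-- The potential `K*f(x) = ∫ K(x,y) f(y) dm(y)` of a function `f` w.r.t. a kernel `K`. -/
def potential {X : Type*} [MeasurableSpace X] (m : Measure X)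
    (K : X → X → ℝ) (f : X → ℝ) (x : X) : ℝ :=
  ∫ y, K x y * f y ∂m

/-- The `L^p` capacity of a set `E` associated to a kernel `K`:
`C_{K,p}(E) = inf { ‖f‖_p^p : f ∈ L^p, K*f ≥ 1 on E }`. -/
def capacity {X : Type*} [MeasurableSpace X] (m : Measure X)
    (K : X → X → ℝ) (p : ℝ) (E : Set X) : ℝ≥0∞ :=
  ⨅ (f : X → ℝ) (_ : MemLp f (ENNReal.ofReal p) m ∧ ∀ x ∈ E, 1 ≤ potential m K f x),
    eLpNorm f (ENNReal.ofReal p) m ^ p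

/-- The Riesz kernel `K_{X,s}(x,y) = d(x,y)^{-Qs}`. -/
def rieszKernel {X : Type*} [MetricSpace X] (Q s : ℝ) (x y : X) : ℝ :=
  dist x y ^ (-(Q * s))

/-- `(X,d,m)` is Ahlfors `Q`-regular: `c₁ r^Q ≤ m(B(x,r)) ≤ c₂ r^Q` for `0 < r < diam X`. -/
def IsAhlfors {X : Type*} [MetricSpace X] [MeasurableSpace X] (m : Measure X) (Q : ℝ) : Prop :=
  ∃ c₁ c₂ : ℝ, 0 < c₁ ∧ c₁ ≤ c₂ ∧ ∀ (x : X) (r : ℝ), 0 < r →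
    r < Metric.diam (Set.univ : Set X) →
    ENNReal.ofReal (c₁ * r ^ Q) ≤ m (Metric.ball x r) ∧
      m (Metric.ball x r) ≤ ENNReal.ofReal (c₂ * r ^ Q)

/-- The set appearing in the definition of the Aikawa–Borichev radius
`η_{X,p}(x,r)`: radii `R > 0` with `m(B(x,R)) ≥ C_{K_{X,s},p}(B(x,r))`. -/
def etaSet {X : Type*} [MetricSpace X] [MeasurableSpace X] (m : Measure X)
    (Q s p : ℝ) (x : X) (r : ℝ) : Set ℝ :=
  {R : ℝ | 0 < R ∧ capacity m (rieszKernel Q s) p (Metric.ball x r) ≤ m (Metric.ball x R)}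

/-- The Aikawa–Borichev radius `η*_{X,p}(x,r) = max (r, η_{X,p}(x,r))`. -/
def etaStar {X : Type*} [MetricSpace X] [MeasurableSpace X] (m : Measure X)
    (Q s p : ℝ) (x : X) (r : ℝ) : ℝ :=
  max r (sInf (etaSet m Q s p x r))

/-- The (unnormalized) dyadic Poisson kernel
`y^{-Q} Σ_k 2^{-(Q+1)k} χ_{B(x,2^k y)}(z)`. -/
def dyadicPoissonKernel {X : Type*} [MetricSpace X] (Q : ℝ) (x : X) (y : ℝ) (z : X) : ℝ :=
  y ^ (-Q) * ∑' k : ℕ, (2 : ℝ) ^ (-((Q + 1) * (k : ℝ))) *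
    (Metric.ball x (2 ^ k * y)).indicator (fun _ => (1 : ℝ)) z

/-- The dyadic Poisson integral `PI(g)(x,y)` on `X × (0,∞)`. -/
def PI {X : Type*} [MetricSpace X] [MeasurableSpace X] (m : Measure X) (Q : ℝ)
    (g : X → ℝ) (x : X) (y : ℝ) : ℝ :=
  (∫ z, dyadicPoissonKernel Q x y z ∂m)⁻¹ * ∫ z, dyadicPoissonKernel Q x y z * g z ∂m


/-- The double sum
`S(x,w,y) = Σ_{j∈ℤ} Σ_{k∈ℕ} 2^{-[(Q+1)k + Qsj]} m(B(x,2^j) ∩ B(w,2^k y))`. -/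
def Ssum {X : Type*} [MetricSpace X] [MeasurableSpace X] (m : Measure X)
    (Q s : ℝ) (x w : X) (y : ℝ) : ℝ≥0∞ :=
  ∑' (j : ℤ) (k : ℕ),
    ENNReal.ofReal ((2 : ℝ) ^ (-((Q + 1) * (k : ℝ) + Q * s * (j : ℝ)))) *
      m (Metric.ball x ((2 : ℝ) ^ j) ∩ Metric.ball w (2 ^ k * y))

open Metric

namespace IsAhlfors

variable {X : Type*} [MetricSpace X] [MeasurableSpace X] {m : Measure X} {Q : ℝ}

theorem measure_univ_lt_top [CompactSpace X] (h : IsAhlfors m Q)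
    (hdiam : 0 < diam (Set.univ : Set X)) : m Set.univ < ∞ := by
  obtain ⟨c₁, c₂, -, -, hball⟩ := h
  refine isCompact_univ.measure_lt_top_of_nhdsWithin fun x _ =>
    ⟨ball x (diam (Set.univ : Set X) / 2), mem_nhdsWithin_of_mem_nhds (ball_mem_nhds x ?_), ?_⟩
  · positivity
  · exact (hball x _ (by positivity) (by linarith)).2.trans_lt ofReal_lt_top

/-- Balls of equal radius have comparable measures: below half the diameter by Ahlfors regularity,
above it because the measure is finite and balls of radius half the diameter are uniformly heavy. -/
theorem exists_measure_ball_le_mul_measure_ball [CompactSpace X] (h : IsAhlfors m Q) :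
    ∃ C : ℝ≥0, ∀ (u v : X) (r : ℝ), m (ball u r) ≤ C * m (ball v r) := by
  set Δ := diam (Set.univ : Set X)
  rcases le_or_gt Δ 0 with hΔ | hΔ
  · have : Subsingleton X := ⟨fun u v => dist_le_zero.1 <|
      (dist_le_diam_of_mem isCompact_univ.isBounded (Set.mem_univ u) (Set.mem_univ v)).trans hΔ⟩
    exact ⟨1, fun u v r => by rw [Subsingleton.elim u v, ENNReal.coe_one, one_mul]⟩
  have hfin := h.measure_univ_lt_top hΔ
  obtain ⟨c₁, c₂, hc₁, hc₁₂, hball⟩ := h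
  set L := ENNReal.ofReal (c₁ * (Δ / 2) ^ Q)
  have hL : L ≠ 0 := by simp only [L, ne_eq, ENNReal.ofReal_eq_zero, not_le]; positivity
  set C := max (ENNReal.ofReal (c₂ / c₁)) (m Set.univ / L)
  have hC : C ≠ ∞ := max_ne_top ofReal_ne_top (ENNReal.div_ne_top hfin.ne hL)
  refine ⟨C.toNNReal, fun u v r => ?_⟩
  rw [coe_toNNReal hC]
  rcases le_or_gt r 0 with hr | hr
  · simp [ball_eq_empty.2 hr]
  rcases lt_or_ge r (Δ / 2) with hrΔ | hrΔ
  · calc m (ball u r) ≤ ENNReal.ofReal (c₂ * r ^ Q) := (hball u r hr (by linarith)).2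
      _ = ENNReal.ofReal (c₂ / c₁) * ENNReal.ofReal (c₁ * r ^ Q) := by
        rw [← ENNReal.ofReal_mul (div_nonneg (hc₁.le.trans hc₁₂) hc₁.le)]
        congr 1
        field_simp
      _ ≤ C * m (ball v r) := by gcongr; exacts [le_max_left _ _, (hball v r hr (by linarith)).1]
  · calc m (ball u r) ≤ m Set.univ / L * L := by
          rw [ENNReal.div_mul_cancel hL ofReal_ne_top]; exact measure_mono (Set.subset_univ _)
      _ ≤ C * m (ball v (Δ / 2)) := by
          gcongr; exacts [le_max_right _ _, (hball v _ (by positivity) (by linarith)).1]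
      _ ≤ C * m (ball v r) := by gcongr

end IsAhlfors

section ComparableBalls

variable {X : Type*} [MetricSpace X] [MeasurableSpace X] {m : Measure X} {C : ℝ≥0∞}

theorem measure_ball_inter_ball_le_mul_of_le
    (hC : ∀ (u v : X) (r : ℝ), m (ball u r) ≤ C * m (ball v r))
    {u v : X} {r R : ℝ} (hrR : r ≤ R) :
    m (ball u r ∩ ball v R) ≤ C * m (ball v (4 * r) ∩ ball u (4 * R)) := by
  rcases (ball u r ∩ ball v R).eq_empty_or_nonempty with hempty | ⟨z, hzu, hzv⟩
  · simp [hempty]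
  have hsub : ball v r ⊆ ball v (4 * r) ∩ ball u (4 * R) := fun p hp => by
    rw [mem_ball] at hp hzu hzv
    have := dist_triangle4 p v z u
    rw [dist_comm v z] at this
    constructor <;> rw [mem_ball] <;> linarith [dist_nonneg (x := p) (y := v)]
  calc m (ball u r ∩ ball v R) ≤ m (ball u r) := measure_mono Set.inter_subset_left
    _ ≤ C * m (ball v r) := hC u v r
    _ ≤ C * m (ball v (4 * r) ∩ ball u (4 * R)) := by gcongr

theorem measure_ball_inter_ball_le_mul
    (hC : ∀ (u v : X) (r : ℝ), m (ball u r) ≤ C * m (ball v r)) (u v : X) (r R : ℝ) :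
    m (ball u r ∩ ball v R) ≤ C * m (ball v (4 * r) ∩ ball u (4 * R)) := by
  rcases le_total r R with hrR | hRr
  · exact measure_ball_inter_ball_le_mul_of_le hC hrR
  · rw [Set.inter_comm (ball u r), Set.inter_comm (ball v (4 * r))]
    exact measure_ball_inter_ball_le_mul_of_le hC hRr

/-- Swapping the centres costs the factor `C` and a shift of both `j` and `k` by `2`,
which the weights absorb as the factor `2 ^ (2(Q+1) + 2Qs)`. -/
theorem Ssum_le_mul_Ssum_swap
    (hC : ∀ (u v : X) (r : ℝ), m (ball u r) ≤ C * m (ball v r)) (Q s : ℝ) (x w : X) (y : ℝ) :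
    Ssum m Q s x w y ≤
      C * ENNReal.ofReal (2 ^ (2 * (Q + 1) + 2 * (Q * s))) * Ssum m Q s w x y := by
  set G : ℤ → ℕ → ℝ≥0∞ := fun j k =>
    ENNReal.ofReal ((2 : ℝ) ^ (-((Q + 1) * (k : ℝ) + Q * s * (j : ℝ)))) *
      m (ball w ((2 : ℝ) ^ j) ∩ ball x (2 ^ k * y))
  have hterm (j : ℤ) (k : ℕ) :
      ENNReal.ofReal ((2 : ℝ) ^ (-((Q + 1) * (k : ℝ) + Q * s * (j : ℝ)))) *
          m (ball x ((2 : ℝ) ^ j) ∩ ball w (2 ^ k * y)) ≤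
        C * ENNReal.ofReal (2 ^ (2 * (Q + 1) + 2 * (Q * s))) * G (j + 2) (k + 2) := by
    have hweight : (2 : ℝ) ^ (-((Q + 1) * (k : ℝ) + Q * s * (j : ℝ))) =
        2 ^ (2 * (Q + 1) + 2 * (Q * s)) *
          2 ^ (-((Q + 1) * ((k + 2 : ℕ) : ℝ) + Q * s * ((j + 2 : ℤ) : ℝ))) := by
      rw [← Real.rpow_add two_pos]
      push_cast
      ring_nf
    have hj : (2 : ℝ) ^ (j + 2) = 4 * 2 ^ j := by
      rw [zpow_add₀ two_ne_zero]; norm_num; ring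
    have hk : (2 : ℝ) ^ (k + 2) * y = 4 * (2 ^ k * y) := by ring
    simp only [G, hj, hk, hweight, ENNReal.ofReal_mul (Real.rpow_nonneg zero_le_two _)]
    calc _ ≤ _ * _ * (C * m (ball w (4 * 2 ^ j) ∩ ball x (4 * (2 ^ k * y)))) :=
          mul_le_mul_right (measure_ball_inter_ball_le_mul hC x w _ _) _
      _ = _ := by ring
  have hshift : ∑' (j : ℤ) (k : ℕ), G (j + 2) (k + 2) ≤ ∑' (j : ℤ) (k : ℕ), G j k :=
    calc ∑' (j : ℤ) (k : ℕ), G (j + 2) (k + 2) ≤ ∑' (j : ℤ) (k : ℕ), G (j + 2) k :=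
          ENNReal.tsum_le_tsum fun j =>
            ENNReal.tsum_comp_le_tsum_of_injective (add_left_injective 2) (G (j + 2))
      _ = ∑' (j : ℤ) (k : ℕ), G j k := (Equiv.addRight 2).tsum_eq fun j => ∑' k, G j k
  calc Ssum m Q s x w y
      ≤ ∑' (j : ℤ) (k : ℕ), C * ENNReal.ofReal (2 ^ (2 * (Q + 1) + 2 * (Q * s))) *
          G (j + 2) (k + 2) :=
        ENNReal.tsum_le_tsum fun j => ENNReal.tsum_le_tsum fun k => hterm j k
    _ = C * ENNReal.ofReal (2 ^ (2 * (Q + 1) + 2 * (Q * s))) *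
          ∑' (j : ℤ) (k : ℕ), G (j + 2) (k + 2) := by simp only [ENNReal.tsum_mul_left]
    _ ≤ C * ENNReal.ofReal (2 ^ (2 * (Q + 1) + 2 * (Q * s))) * Ssum m Q s w x y :=
        mul_le_mul_right hshift _

end ComparableBalls

theorem ENNReal.exists_comparable_of_le_mul {ι : Type*} {f g : ι → ℝ≥0∞} (K : ℝ≥0)
    (hfg : ∀ i, f i ≤ K * g i) (hgf : ∀ i, g i ≤ K * f i) :
    ∃ c₁ c₂ : ℝ, 0 < c₁ ∧ c₁ ≤ c₂ ∧ ∀ i, ENNReal.ofReal c₁ * g i ≤ f i ∧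
      f i ≤ ENNReal.ofReal c₂ * g i := by
  set c : ℝ := max 1 K
  have hc : 1 ≤ c := le_max_left _ _
  have hK : (K : ℝ≥0∞) ≤ ENNReal.ofReal c := by
    rw [← ENNReal.ofReal_coe_nnreal]; exact ENNReal.ofReal_le_ofReal (le_max_right _ _)
  refine ⟨c⁻¹, c, by positivity, (inv_le_one_of_one_le₀ hc).trans hc, fun i => ⟨?_, ?_⟩⟩
  · calc ENNReal.ofReal c⁻¹ * g i ≤ ENNReal.ofReal c⁻¹ * (ENNReal.ofReal c * f i) := by
          gcongr; exact (hgf i).trans (by gcongr)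
      _ = f i := by
          rw [← mul_assoc, ← ENNReal.ofReal_mul (by positivity),
            inv_mul_cancel₀ (by positivity), ENNReal.ofReal_one, one_mul]
  · exact (hfg i).trans (by gcongr)

theorem dyadic_double_sum_symmetric_comparable_general
    {X : Type*} [MetricSpace X] [CompactSpace X] [MeasurableSpace X]
    (m : Measure X) (Q : ℝ) (hAhl : IsAhlfors m Q)
    (s : ℝ) :
    ∃ c₁ c₂ : ℝ, 0 < c₁ ∧ c₁ ≤ c₂ ∧
      ∀ (x w : X) (y : ℝ), 0 < y →
        ENNReal.ofReal c₁ * Ssum m Q s w x y ≤ Ssum m Q s x w y ∧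
          Ssum m Q s x w y ≤ ENNReal.ofReal c₂ * Ssum m Q s w x y := by
  obtain ⟨C, hC⟩ := hAhl.exists_measure_ball_le_mul_measure_ball
  set K : ℝ≥0 := C * ((2 : ℝ) ^ (2 * (Q + 1) + 2 * (Q * s))).toNNReal
  have hswap (x w : X) (y : ℝ) : Ssum m Q s x w y ≤ K * Ssum m Q s w x y := by
    simpa only [K, ENNReal.coe_mul, ENNReal.ofReal] using Ssum_le_mul_Ssum_swap hC Q s x w y
  obtain ⟨c₁, c₂, hc₁, hc₁₂, hcomp⟩ := ENNReal.exists_comparable_of_le_mul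
    (f := fun p : X × X × ℝ => Ssum m Q s p.1 p.2.1 p.2.2)
    (g := fun p => Ssum m Q s p.2.1 p.1 p.2.2) K
    (fun _ => hswap _ _ _) (fun _ => hswap _ _ _)
  exact ⟨c₁, c₂, hc₁, hc₁₂, fun x w y _ => hcomp (x, w, y)⟩

/-- **Symmetry, up to constants, of the dyadic double sum.**  On a compact
Ahlfors `Q`-regular space, for `0 < s < 1` there are `0 < c₁ ≤ c₂ < ∞`
depending only on `X`, `Q` and `s` such that for all `x, w ∈ X` and `y > 0`:
`c₁ S(w,x,y) ≤ S(x,w,y) ≤ c₂ S(w,x,y)`. -/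
theorem dyadic_double_sum_symmetric_comparable
    {X : Type*} [MetricSpace X] [CompactSpace X] [MeasurableSpace X] [BorelSpace X]
    (m : Measure X) (Q : ℝ) (hQ : 0 < Q) (hAhl : IsAhlfors m Q)
    (s : ℝ) (hs0 : 0 < s) (hs1 : s < 1) :
    ∃ c₁ c₂ : ℝ, 0 < c₁ ∧ c₁ ≤ c₂ ∧
      ∀ (x w : X) (y : ℝ), 0 < y →
        ENNReal.ofReal c₁ * Ssum m Q s w x y ≤ Ssum m Q s x w y ∧
          Ssum m Q s x w y ≤ ENNReal.ofReal c₂ * Ssum m Q s w x y :=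
  dyadic_double_sum_symmetric_comparable_general m Q hAhl s

end
end

section
/- Let (X,d,m) be a compact Ahlfors Q-regular space, let p > 1 with 1/p + 1/p' = 1, and let 1/p' ≤ s < 1. Then there exist constants 0 < c1 ≤ c2 < ∞, depending only on X, Q and s, such that for every nonnegative f ∈ L^p(X,m), every x ∈ X and every y > 0: c1 · PI(K_{X,s}*f)(x,y) ≤ ( K_{X,s} * (PI(f)(·,y)) )(x) ≤ c2 · PI(K_{X,s}*f)(x,y); that is, applying first the dyadic Poisson integral at height y and then the Riesz potential is comparable to applying them in the opposite order. -/
noncomputable section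

open MeasureTheory ENNReal NNReal

/-!
Everything is transferred to `ℝ≥0∞`-valued kernels, where Tonelli's theorem applies without
integrability side conditions. By Tonelli, `K * PI(f)(·,y)` and `PI(K * f)(·,y)` at `x` are the
integrals of `f(w)` against `I(x, w)` and `I(w, x)`, where `I(a, b) = ∫ K(a,z) P_y(b,z) dm(z)`,
up to the normalising masses `∫ P_y(z,·) dm`. Ahlfors regularity makes these masses comparable
to `y^{-Q} min(y, diam X / 2)^Q` uniformly in `z`, so it suffices that `I` is symmetric up to a
constant. Since `P_y(b,·)` is a geometric series of indicators of the balls `B(b, 2^k y)`, this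
reduces to `∫_{B(b,r)} d(a,·)^{-Qs} ≲ ∫_{B(a,r)} d(b,·)^{-Qs}`. Both sides are comparable to
`ρ^Q (d(a,b) + ρ)^{-Qs}` with `ρ = min(r, diam X / 2)`: from below by integrating over `B(a, ρ)`;
from above by the kernel bound `(d(a,b)/2)^{-Qs}` when `2r ≤ d(a,b)`, and otherwise by summing
over dyadic annuli of `B(a, 4ρ)`, a geometric series because `Qs < Q`.
-/

open Metric Set Filter Topology Function

section KernelOperators

variable {X : Type*} [MeasurableSpace X] {m : Measure X}

def lpotential (m : Measure X) (k : X → X → ℝ≥0∞) (F : X → ℝ≥0∞) (x : X) : ℝ≥0∞ :=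
  ∫⁻ z, k x z * F z ∂m

-- For the dyadic Poisson kernel this is `PI`, see `PI_toReal`.
def lnormalizedPotential (m : Measure X) (k : X → X → ℝ≥0∞) (F : X → ℝ≥0∞) (x : X) : ℝ≥0∞ :=
  (∫⁻ z, k x z ∂m)⁻¹ * lpotential m k F x

variable {k P : X → X → ℝ≥0∞} {F : X → ℝ≥0∞}

lemma measurable_lpotential [SFinite m] (hk : Measurable (uncurry k)) (hF : Measurable F) :
    Measurable (lpotential m k F) :=
  (hk.mul (hF.comp measurable_snd)).lintegral_prod_right'

lemma measurable_lnormalizedPotential [SFinite m] (hk : Measurable (uncurry k))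
    (hF : Measurable F) : Measurable (lnormalizedPotential m k F) :=
  hk.lintegral_prod_right'.inv.mul (measurable_lpotential hk hF)

lemma lpotential_lpotential [SFinite m] (x : X) (hk : Measurable (k x))
    (hP : Measurable (uncurry P)) (hF : Measurable F) :
    lpotential m k (lpotential m P F) x = ∫⁻ w, (∫⁻ z, k x z * P z w ∂m) * F w ∂m := by
  have hPF : Measurable (uncurry fun z w => P z w * F w) := hP.mul (hF.comp measurable_snd)
  calc lpotential m k (lpotential m P F) x
      = ∫⁻ z, ∫⁻ w, k x z * (P z w * F w) ∂m ∂m :=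
        lintegral_congr fun z => (lintegral_const_mul _ hPF.of_uncurry_left).symm
    _ = ∫⁻ w, ∫⁻ z, k x z * (P z w * F w) ∂m ∂m :=
        lintegral_lintegral_swap (by exact ((hk.comp measurable_fst).mul hPF).aemeasurable)
    _ = ∫⁻ w, (∫⁻ z, k x z * P z w ∂m) * F w ∂m := by
        refine lintegral_congr fun w => ?_
        simp_rw [← mul_assoc]
        exact lintegral_mul_const _ (by exact hk.mul hP.of_uncurry_right)

lemma lpotential_lpotential_le_mul [SFinite m] (hk : Measurable (uncurry k))
    (hP : Measurable (uncurry P)) (hF : Measurable F) (hks : ∀ a b, k a b = k b a)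
    (hPs : ∀ a b, P a b = P b a) {C : ℝ≥0}
    (hI : ∀ a b, ∫⁻ z, k a z * P b z ∂m ≤ C * ∫⁻ z, k b z * P a z ∂m) (x : X) :
    lpotential m k (lpotential m P F) x ≤ C * lpotential m P (lpotential m k F) x := by
  rw [lpotential_lpotential x hk.of_uncurry_left hP hF,
    lpotential_lpotential x hP.of_uncurry_left hk hF, ← lintegral_const_mul' _ _ coe_ne_top]
  refine lintegral_mono fun w => ?_
  rw [← mul_assoc]
  gcongr
  calc ∫⁻ z, k x z * P z w ∂m = ∫⁻ z, k x z * P w z ∂m := by simp only [hPs _ w]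
    _ ≤ C * ∫⁻ z, k w z * P x z ∂m := hI x w
    _ = C * ∫⁻ z, P x z * k z w ∂m := by simp only [hks w, mul_comm]

theorem lpotential_lnormalizedPotential_comparable [SFinite m] (hk : Measurable (uncurry k))
    (hP : Measurable (uncurry P)) (hF : Measurable F) (hks : ∀ a b, k a b = k b a)
    (hPs : ∀ a b, P a b = P b a) {C₁ C₂ : ℝ≥0}
    (hN : ∀ z w, (∫⁻ v, P z v ∂m)⁻¹ ≤ C₁ * (∫⁻ v, P w v ∂m)⁻¹)
    (hI : ∀ a b, ∫⁻ z, k a z * P b z ∂m ≤ C₂ * ∫⁻ z, k b z * P a z ∂m) (x : X) :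
    lpotential m k (lnormalizedPotential m P F) x
        ≤ ↑(C₁ * C₂) * lnormalizedPotential m P (lpotential m k F) x ∧
      lnormalizedPotential m P (lpotential m k F) x
        ≤ ↑(C₁ * C₂) * lpotential m k (lnormalizedPotential m P F) x := by
  set N := fun z => ∫⁻ v, P z v ∂m
  set G := lpotential m P F
  have hkP := lpotential_lpotential_le_mul hk hP hF hks hPs hI x
  have hPk := lpotential_lpotential_le_mul hP hk hF hPs hks
    (fun a b => by simpa only [mul_comm] using hI b a) x
  have hG : Measurable fun z => k x z * G z := hk.of_uncurry_left.mul (measurable_lpotential hP hF)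
  constructor
  · calc lpotential m k (lnormalizedPotential m P F) x
        ≤ ∫⁻ z, C₁ * ((N x)⁻¹ * (k x z * G z)) ∂m := by
          refine lintegral_mono fun z => ?_
          calc k x z * ((N z)⁻¹ * G z) ≤ k x z * (C₁ * (N x)⁻¹ * G z) := by
                gcongr; exact hN z x
            _ = C₁ * ((N x)⁻¹ * (k x z * G z)) := by ring
      _ = C₁ * ((N x)⁻¹ * lpotential m k G x) := by
          rw [lintegral_const_mul' _ _ coe_ne_top, lintegral_const_mul _ hG]; rfl
      _ ≤ C₁ * ((N x)⁻¹ * (C₂ * lpotential m P (lpotential m k F) x)) :=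
          mul_le_mul_right (mul_le_mul_right hkP _) _
      _ = ↑(C₁ * C₂) * lnormalizedPotential m P (lpotential m k F) x := by
          rw [lnormalizedPotential, coe_mul]; ring
  · calc lnormalizedPotential m P (lpotential m k F) x
        ≤ (N x)⁻¹ * (C₂ * lpotential m k G x) := mul_le_mul_right hPk _
      _ = C₂ * ((N x)⁻¹ * ∫⁻ z, k x z * G z ∂m) := by rw [lpotential]; ring
      _ ≤ C₂ * ∫⁻ z, (N x)⁻¹ * (k x z * G z) ∂m :=
          mul_le_mul_right (lintegral_const_mul_le _ _) _
      _ ≤ C₂ * ∫⁻ z, C₁ * (k x z * ((N z)⁻¹ * G z)) ∂m := by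
          refine mul_le_mul_right (lintegral_mono fun z => ?_) _
          calc (N x)⁻¹ * (k x z * G z) ≤ C₁ * (N z)⁻¹ * (k x z * G z) := by
                gcongr; exact hN x z
            _ = C₁ * (k x z * ((N z)⁻¹ * G z)) := by ring
      _ = ↑(C₁ * C₂) * lpotential m k (lnormalizedPotential m P F) x := by
          rw [lintegral_const_mul' _ _ coe_ne_top, coe_mul, mul_left_comm, ← mul_assoc]
          rfl

lemma lpotential_le_mul_lintegral {B : ℝ≥0∞} (hB : B ≠ ⊤) {x : X} (hkB : ∀ z, k x z ≤ B) :
    lpotential m k F x ≤ B * ∫⁻ z, F z ∂m :=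
  (lintegral_mono fun z => mul_le_mul_left (hkB z) _).trans_eq (lintegral_const_mul' _ _ hB)

lemma lnormalizedPotential_ne_top {x : X} (hN : ∫⁻ z, P x z ∂m ≠ 0) {B : ℝ≥0∞} (hB : B ≠ ⊤)
    (hPB : ∀ z, P x z ≤ B) (hF : ∫⁻ z, F z ∂m ≠ ⊤) : lnormalizedPotential m P F x ≠ ⊤ :=
  mul_ne_top (inv_ne_top.2 hN)
    (ne_top_of_le_ne_top (mul_ne_top hB hF) (lpotential_le_mul_lintegral hB hPB))

lemma lintegral_lpotential_le [SFinite m] (hk : Measurable (uncurry k)) (hF : Measurable F)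
    {B : ℝ≥0∞} (hkB : ∀ z, ∫⁻ x, k x z ∂m ≤ B) :
    ∫⁻ x, lpotential m k F x ∂m ≤ B * ∫⁻ z, F z ∂m := by
  calc ∫⁻ x, lpotential m k F x ∂m = ∫⁻ z, (∫⁻ x, k x z ∂m) * F z ∂m := by
        unfold lpotential
        rw [lintegral_lintegral_swap (by exact (hk.mul (hF.comp measurable_snd)).aemeasurable)]
        exact lintegral_congr fun z => lintegral_mul_const _ hk.of_uncurry_right
    _ ≤ ∫⁻ z, B * F z ∂m := lintegral_mono fun z => mul_le_mul_left (hkB z) _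
    _ = B * ∫⁻ z, F z ∂m := lintegral_const_mul _ hF

end KernelOperators

section ElementaryEstimates

lemma tsum_ofReal_mul_geometric {a q : ℝ} (ha : 0 ≤ a) (hq0 : 0 ≤ q) (hq1 : q < 1) :
    ∑' j : ℕ, ENNReal.ofReal (a * q ^ j) = ENNReal.ofReal (a / (1 - q)) := by
  rw [← ENNReal.ofReal_tsum_of_nonneg (fun j => by positivity)
    ((summable_geometric_of_lt_one hq0 hq1).mul_left a), _root_.tsum_mul_left,
    tsum_geometric_of_lt_one hq0 hq1, div_eq_mul_inv]

lemma exists_div_two_pow_succ_le_lt {r R : ℝ} (hr : 0 < r) (hrR : r < R) :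
    ∃ j : ℕ, R / 2 ^ (j + 1) ≤ r ∧ r < R / 2 ^ j := by
  have hex : ∃ j : ℕ, R / 2 ^ (j + 1) ≤ r := by
    have hR : 0 < R := hr.trans hrR
    obtain ⟨j, hj⟩ := exists_pow_lt_of_lt_one (div_pos hr hR) (by norm_num : (1 / 2 : ℝ) < 1)
    refine ⟨j, ?_⟩
    calc R / 2 ^ (j + 1) ≤ R / 2 ^ j := by gcongr <;> norm_num
      _ = (1 / 2) ^ j * R := by rw [one_div_pow, one_div_mul_eq_div]
      _ ≤ r := ((lt_div_iff₀ hR).1 hj).le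
  refine ⟨Nat.find hex, Nat.find_spec hex, ?_⟩
  rcases h : Nat.find hex with _ | j
  · simpa using hrR
  · exact lt_of_not_ge (Nat.find_min hex (show j < Nat.find hex by omega))

lemma div_two_pow_rpow_mul_rpow {R : ℝ} (hR : 0 < R) (α Q c : ℝ) (j : ℕ) :
    (R / 2 ^ (j + 1)) ^ (-α) * (c * (R / 2 ^ j) ^ Q)
      = c * 2 ^ α * R ^ (Q - α) * ((2 : ℝ) ^ (α - Q)) ^ j := by
  have e : ∀ (n : ℕ) (β : ℝ), (R / 2 ^ n) ^ β = R ^ β * 2 ^ (-(n * β)) := by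
    intro n β
    rw [Real.div_rpow hR.le (by positivity), ← Real.rpow_natCast, ← Real.rpow_mul (by norm_num),
      Real.rpow_neg (by norm_num), div_eq_mul_inv]
  have h2 : (2 : ℝ) ^ (-(((j + 1 : ℕ) : ℝ) * (-α))) * 2 ^ (-((j : ℝ) * Q))
      = 2 ^ α * 2 ^ ((α - Q) * j) := by
    rw [← Real.rpow_add two_pos, ← Real.rpow_add two_pos]
    push_cast
    ring_nf
  rw [e, e, sub_eq_add_neg Q α, Real.rpow_add hR, ← Real.rpow_natCast _ j,
    ← Real.rpow_mul (by norm_num)]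
  linear_combination (c * R ^ Q * R ^ (-α)) * h2

lemma min_mul_le_two_mul_mul_min_half {t r D : ℝ} (ht : 1 ≤ t) (hr : 0 ≤ r) (hD : 0 ≤ D) :
    min (t * r) D ≤ 2 * t * min r (D / 2) := by
  rcases le_total r (D / 2) with h | h
  · rw [min_eq_left h]; nlinarith [min_le_left (t * r) D]
  · rw [min_eq_right h]; nlinarith [min_le_right (t * r) D]

lemma rpow_neg_le_mul_rpow_neg {x y c α : ℝ} (hx : 0 < x) (hc : 0 < c) (hα : 0 ≤ α)
    (h : x ≤ c * y) : y ^ (-α) ≤ c ^ α * x ^ (-α) := by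
  have hy : 0 < y := pos_of_mul_pos_right (hx.trans_le h) hc.le
  calc y ^ (-α) = c ^ α * (c * y) ^ (-α) := by
        rw [Real.mul_rpow hc.le hy.le, ← mul_assoc, ← Real.rpow_add hc, add_neg_cancel,
          Real.rpow_zero, one_mul]
    _ ≤ c ^ α * x ^ (-α) :=
        mul_le_mul_of_nonneg_left (Real.rpow_le_rpow_of_nonpos hx h (neg_nonpos.2 hα))
          (by positivity)

lemma inv_le_ofReal_mul_inv {a b : ℝ≥0∞} {l K : ℝ} (hl : 0 < l) (hK : 0 < K)
    (ha : ENNReal.ofReal l ≤ a) (hb : b ≤ ENNReal.ofReal (K * l)) :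
    a⁻¹ ≤ ENNReal.ofReal K * b⁻¹ :=
  calc a⁻¹ ≤ (ENNReal.ofReal l)⁻¹ := ENNReal.inv_le_inv.2 ha
    _ = ENNReal.ofReal K * (ENNReal.ofReal (K * l))⁻¹ := by
        rw [← ofReal_inv_of_pos hl, ← ofReal_inv_of_pos (by positivity), ← ofReal_mul hK.le]
        congr 1; field_simp
    _ ≤ ENNReal.ofReal K * b⁻¹ := mul_le_mul_right (ENNReal.inv_le_inv.2 hb) _

lemma toReal_comparable {a b : ℝ≥0∞} {K : ℝ≥0} (hb : b ≠ ⊤) (hab : a ≤ K * b)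
    (hba : b ≤ K * a) :
    (max (K : ℝ) 1)⁻¹ * b.toReal ≤ a.toReal ∧ a.toReal ≤ max (K : ℝ) 1 * b.toReal := by
  have ha : a ≠ ⊤ := ne_top_of_le_ne_top (mul_ne_top coe_ne_top hb) hab
  have h₁ : a.toReal ≤ K * b.toReal := by
    simpa using toReal_mono (mul_ne_top coe_ne_top hb) hab
  have h₂ : b.toReal ≤ K * a.toReal := by
    simpa using toReal_mono (mul_ne_top coe_ne_top ha) hba
  constructor
  · rw [inv_mul_le_iff₀ (lt_max_of_lt_right one_pos)]
    exact h₂.trans (mul_le_mul_of_nonneg_right (le_max_left _ _) toReal_nonneg)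
  · exact h₁.trans (mul_le_mul_of_nonneg_right (le_max_left _ _) toReal_nonneg)

end ElementaryEstimates

section BallBounds

variable {X : Type*} [MetricSpace X]

lemma ball_eq_univ_of_diam_lt [BoundedSpace X] (x : X) {r : ℝ} (hr : diam (univ : Set X) < r) :
    ball x r = univ :=
  eq_univ_of_forall fun z =>
    mem_ball.2 ((dist_le_diam_of_mem (Bornology.isBounded_univ.2 ‹_›) trivial trivial).trans_lt hr)

variable [MeasurableSpace X] {m : Measure X} {Q c : ℝ}

def BallLowerBound (m : Measure X) (Q c : ℝ) : Prop :=
  ∀ (x : X) (r : ℝ), 0 < r → r < diam (univ : Set X) → ENNReal.ofReal (c * r ^ Q) ≤ m (ball x r)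

def BallUpperBound (m : Measure X) (Q c : ℝ) : Prop :=
  ∀ (x : X) (r : ℝ), 0 < r → m (ball x r) ≤ ENNReal.ofReal (c * min r (diam (univ : Set X)) ^ Q)

lemma IsAhlfors.isFiniteMeasure [CompactSpace X] (h : IsAhlfors m Q)
    (hD : 0 < diam (univ : Set X)) : IsFiniteMeasure m := by
  obtain ⟨c₁, c₂, -, -, hball⟩ := h
  obtain ⟨t, ht⟩ := isCompact_univ.elim_finite_subcover
    (fun x : X => ball x (diam (univ : Set X) / 2)) (fun _ => isOpen_ball)
    fun x _ => mem_iUnion.2 ⟨x, mem_ball_self (by linarith)⟩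
  refine ⟨(measure_mono ht).trans_lt ((measure_biUnion_finset_le t _).trans_lt ?_)⟩
  exact ENNReal.sum_lt_top.2 fun x _ =>
    ((hball x _ (by linarith) (by linarith)).2).trans_lt ofReal_lt_top

lemma IsAhlfors.exists_ballBounds [CompactSpace X] (h : IsAhlfors m Q)
    (hD : 0 < diam (univ : Set X)) :
    ∃ c₁ c : ℝ, 0 < c₁ ∧ 0 < c ∧ BallLowerBound m Q c₁ ∧ BallUpperBound m Q c := by
  have := h.isFiniteMeasure hD
  obtain ⟨c₁, c₂, hc₁, hc₁₂, hball⟩ := h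
  set D := diam (univ : Set X)
  have hDQ : 0 < D ^ Q := Real.rpow_pos_of_pos hD Q
  -- for `r ≥ diam X` the bound comes from the finite total mass
  refine ⟨c₁, max c₂ ((m univ).toReal / D ^ Q), hc₁, lt_max_of_lt_left (hc₁.trans_le hc₁₂),
    fun x r hr hrD => (hball x r hr hrD).1, fun x r hr => ?_⟩
  rcases lt_or_ge r D with hrD | hrD
  · refine (hball x r hr hrD).2.trans (ofReal_le_ofReal ?_)
    rw [min_eq_left hrD.le]
    gcongr
    exact le_max_left _ _
  · rw [min_eq_right hrD, ← ofReal_toReal (measure_ne_top m (ball x r))]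
    refine ofReal_le_ofReal ?_
    calc (m (ball x r)).toReal ≤ (m univ).toReal :=
          toReal_mono (measure_ne_top m univ) (measure_mono (subset_univ _))
      _ = (m univ).toReal / D ^ Q * D ^ Q := by field_simp
      _ ≤ max c₂ ((m univ).toReal / D ^ Q) * D ^ Q := by gcongr; exact le_max_right _ _

lemma BallUpperBound.measure_singleton (h : BallUpperBound m Q c) (hQ : 0 < Q) (x : X) :
    m {x} = 0 := by
  have hcont : Continuous fun r : ℝ => c * min r (diam (univ : Set X)) ^ Q :=
    continuous_const.mul
      ((Real.continuous_rpow_const hQ.le).comp (continuous_id.min continuous_const))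
  have hlim : Tendsto (fun r : ℝ => ENNReal.ofReal (c * min r (diam (univ : Set X)) ^ Q))
      (𝓝[>] 0) (𝓝 0) := by
    have := (ENNReal.continuous_ofReal.comp hcont).tendsto 0
    simp only [comp_apply, min_eq_left diam_nonneg, Real.zero_rpow hQ.ne', mul_zero,
      ofReal_zero] at this
    exact this.mono_left nhdsWithin_le_nhds
  refine le_antisymm (ge_of_tendsto hlim ?_) zero_le
  filter_upwards [self_mem_nhdsWithin] with r hr
  exact (measure_mono (singleton_subset_iff.2 (mem_ball_self hr))).trans (h x r hr)

end BallBounds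

section Riesz

variable {X : Type*} [MetricSpace X]

def rieszENN (α : ℝ) (a z : X) : ℝ≥0∞ := ENNReal.ofReal (dist a z ^ (-α))

lemma rieszENN_comm (α : ℝ) (a z : X) : rieszENN α a z = rieszENN α z a := by
  rw [rieszENN, dist_comm, rieszENN]

lemma rieszKernel_nonneg (Q s : ℝ) (a z : X) : 0 ≤ rieszKernel Q s a z :=
  Real.rpow_nonneg dist_nonneg _

lemma rieszENN_le {α : ℝ} (hα : 0 ≤ α) {a z : X} {t : ℝ} (ht : 0 < t) (h : t ≤ dist a z) :
    rieszENN α a z ≤ ENNReal.ofReal (t ^ (-α)) :=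
  ofReal_le_ofReal (Real.rpow_le_rpow_of_nonpos ht h (neg_nonpos.2 hα))

variable [MeasurableSpace X]

lemma measurable_rieszENN [OpensMeasurableSpace X] [SecondCountableTopology X] (α : ℝ) :
    Measurable (uncurry (rieszENN (X := X) α)) :=
  (measurable_dist.pow_const _).ennreal_ofReal

lemma measurable_rieszKernel [OpensMeasurableSpace X] (Q s : ℝ) (a : X) :
    Measurable (rieszKernel Q s a) :=
  (continuous_const.dist continuous_id).measurable.pow_const _

end Riesz

section RieszBallIntegrals

variable {X : Type*} [MetricSpace X] [MeasurableSpace X] [OpensMeasurableSpace X]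
  {m : Measure X} {Q c α : ℝ}

lemma setLIntegral_ball_rieszENN_self_le (hup : BallUpperBound m Q c) (hc : 0 ≤ c) (hα : 0 ≤ α)
    (hαQ : α < Q) (a : X) {R : ℝ} (hR : 0 < R) :
    ∫⁻ z in ball a R, rieszENN α a z ∂m
      ≤ ENNReal.ofReal (c * 2 ^ α / (1 - 2 ^ (α - Q)) * R ^ (Q - α)) := by
  set q : ℝ := 2 ^ (α - Q)
  have hq1 : q < 1 := Real.rpow_lt_one_of_one_lt_of_neg one_lt_two (by linarith)
  set shell := fun j : ℕ => ball a (R / 2 ^ j) \ ball a (R / 2 ^ (j + 1))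
  have hcover : ball a R ⊆ {a} ∪ ⋃ j, shell j := by
    intro z hz
    rcases eq_or_ne z a with rfl | hza
    · exact Or.inl rfl
    obtain ⟨j, hj₁, hj₂⟩ := exists_div_two_pow_succ_le_lt (dist_pos.2 hza) (mem_ball.1 hz)
    exact Or.inr (mem_iUnion.2 ⟨j, mem_ball.2 hj₂, fun h => (mem_ball.1 h).not_ge hj₁⟩)
  have hshell : ∀ j : ℕ, ∫⁻ z in shell j, rieszENN α a z ∂m
      ≤ ENNReal.ofReal (c * 2 ^ α * R ^ (Q - α) * q ^ j) := by
    intro j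
    have hr : 0 < R / 2 ^ (j + 1) := by positivity
    calc ∫⁻ z in shell j, rieszENN α a z ∂m
        ≤ ∫⁻ _ in shell j, ENNReal.ofReal ((R / 2 ^ (j + 1)) ^ (-α)) ∂m :=
          setLIntegral_mono' (measurableSet_ball.diff measurableSet_ball) fun z hz =>
            rieszENN_le hα hr (by rw [dist_comm]; exact not_lt.1 hz.2)
      _ ≤ ENNReal.ofReal ((R / 2 ^ (j + 1)) ^ (-α)) * ENNReal.ofReal (c * (R / 2 ^ j) ^ Q) := by
          rw [setLIntegral_const]
          refine mul_le_mul_right ((measure_mono sdiff_subset).trans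
            ((hup a _ (by positivity)).trans (ofReal_le_ofReal ?_))) _
          exact mul_le_mul_of_nonneg_left (Real.rpow_le_rpow (le_min (by positivity) diam_nonneg)
            (min_le_left _ _) (by linarith)) hc
      _ = ENNReal.ofReal (c * 2 ^ α * R ^ (Q - α) * q ^ j) := by
          rw [← ofReal_mul (by positivity), div_two_pow_rpow_mul_rpow hR]
  calc ∫⁻ z in ball a R, rieszENN α a z ∂m
      ≤ ∫⁻ z in {a}, rieszENN α a z ∂m + ∫⁻ z in ⋃ j, shell j, rieszENN α a z ∂m :=
        (lintegral_mono_set hcover).trans (lintegral_union_le _ _ _)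
    _ ≤ 0 + ∑' j, ∫⁻ z in shell j, rieszENN α a z ∂m := by
        rw [setLIntegral_measure_zero _ _ (hup.measure_singleton (hα.trans_lt hαQ) a)]
        exact add_le_add_right (lintegral_iUnion_le _ _) _
    _ ≤ ∑' j : ℕ, ENNReal.ofReal (c * 2 ^ α * R ^ (Q - α) * q ^ j) := by
        rw [zero_add]; exact ENNReal.tsum_le_tsum hshell
    _ = ENNReal.ofReal (c * 2 ^ α / (1 - q) * R ^ (Q - α)) := by
        rw [tsum_ofReal_mul_geometric (by positivity) (by positivity) hq1]
        ring_nf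

lemma lintegral_rieszENN_le [BoundedSpace X] (hup : BallUpperBound m Q c) (hc : 0 ≤ c)
    (hα : 0 ≤ α) (hαQ : α < Q) (hD : 0 < diam (univ : Set X)) (a : X) :
    ∫⁻ z, rieszENN α a z ∂m
      ≤ ENNReal.ofReal (c * 2 ^ α / (1 - 2 ^ (α - Q)) * (2 * diam (univ : Set X)) ^ (Q - α)) := by
  calc ∫⁻ z, rieszENN α a z ∂m = ∫⁻ z in ball a (2 * diam (univ : Set X)), rieszENN α a z ∂m := by
        rw [ball_eq_univ_of_diam_lt a (by linarith), setLIntegral_univ]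
    _ ≤ _ := setLIntegral_ball_rieszENN_self_le hup hc hα hαQ a (by linarith)

lemma le_setLIntegral_ball_rieszENN (hlow : BallLowerBound m Q c) (hD : 0 < diam (univ : Set X))
    (hα : 0 ≤ α) (a : X) {b : X} (hb : m {b} = 0) {r : ℝ} (hr : 0 < r) :
    ENNReal.ofReal (c * (min r (diam (univ : Set X) / 2) ^ Q *
        (dist a b + min r (diam (univ : Set X) / 2)) ^ (-α)))
      ≤ ∫⁻ z in ball a r, rieszENN α b z ∂m := by
  set ρ := min r (diam (univ : Set X) / 2)
  have hρ : 0 < ρ := lt_min hr (by linarith)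
  have hρD : ρ < diam (univ : Set X) := (min_le_right _ _).trans_lt (by linarith)
  have hbound : ∀ᵐ z ∂m, z ∈ ball a ρ →
      ENNReal.ofReal ((dist a b + ρ) ^ (-α)) ≤ rieszENN α b z := by
    -- only off `b`: at `z = b` the kernel is the junk value `0 ^ (-α) = 0`
    filter_upwards [compl_mem_ae_iff.2 hb] with z hzb hz
    refine ofReal_le_ofReal (Real.rpow_le_rpow_of_nonpos (dist_pos.2 (Ne.symm hzb)) ?_
      (neg_nonpos.2 hα))
    linarith [dist_triangle b a z, dist_comm a b, dist_comm z a, mem_ball.1 hz]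
  calc ENNReal.ofReal (c * (ρ ^ Q * (dist a b + ρ) ^ (-α)))
      = ENNReal.ofReal ((dist a b + ρ) ^ (-α)) * ENNReal.ofReal (c * ρ ^ Q) := by
        rw [← ofReal_mul (by positivity)]; ring_nf
    _ ≤ ENNReal.ofReal ((dist a b + ρ) ^ (-α)) * m (ball a ρ) :=
        mul_le_mul_right (hlow a ρ hρ hρD) _
    _ = ∫⁻ _ in ball a ρ, ENNReal.ofReal ((dist a b + ρ) ^ (-α)) ∂m := (setLIntegral_const _ _).symm
    _ ≤ ∫⁻ z in ball a ρ, rieszENN α b z ∂m := setLIntegral_mono_ae' measurableSet_ball hbound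
    _ ≤ ∫⁻ z in ball a r, rieszENN α b z ∂m :=
        lintegral_mono_set (ball_subset_ball (min_le_left _ _))

lemma setLIntegral_ball_rieszENN_le_of_le_dist (hup : BallUpperBound m Q c) (hc : 0 ≤ c)
    (hQ : 0 ≤ Q) (hD : 0 < diam (univ : Set X)) (hα : 0 ≤ α) {a b : X} {r : ℝ} (hr : 0 < r)
    (hrd : 2 * r ≤ dist a b) :
    ∫⁻ z in ball b r, rieszENN α a z ∂m ≤ ENNReal.ofReal (3 ^ α * 2 ^ Q * c *
      (min r (diam (univ : Set X) / 2) ^ Q *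
        (dist a b + min r (diam (univ : Set X) / 2)) ^ (-α))) := by
  set d := dist a b
  set ρ := min r (diam (univ : Set X) / 2)
  have hρ : 0 < ρ := lt_min hr (by linarith)
  have hd : 0 < d / 2 := by linarith
  have hfar : ∀ z ∈ ball b r, d / 2 ≤ dist a z := fun z hz => by
    linarith [dist_triangle a z b, mem_ball.1 hz]
  have hball : m (ball b r) ≤ ENNReal.ofReal (c * (2 * ρ) ^ Q) :=
    (hup b r hr).trans (ofReal_le_ofReal (mul_le_mul_of_nonneg_left (Real.rpow_le_rpow
      (le_min hr.le hD.le)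
      (by simpa using min_mul_le_two_mul_mul_min_half le_rfl hr.le hD.le) hQ) hc))
  have hkernel : (d / 2) ^ (-α) ≤ 3 ^ α * (d + ρ) ^ (-α) :=
    rpow_neg_le_mul_rpow_neg (by positivity) (by norm_num) hα
      (by linarith [min_le_left r (diam (univ : Set X) / 2)])
  calc ∫⁻ z in ball b r, rieszENN α a z ∂m
      ≤ ∫⁻ _ in ball b r, ENNReal.ofReal ((d / 2) ^ (-α)) ∂m :=
        setLIntegral_mono' measurableSet_ball fun z hz => rieszENN_le hα hd (hfar z hz)
    _ ≤ ENNReal.ofReal ((d / 2) ^ (-α)) * ENNReal.ofReal (c * (2 * ρ) ^ Q) := by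
        rw [setLIntegral_const]; exact mul_le_mul_right hball _
    _ = ENNReal.ofReal ((d / 2) ^ (-α) * (c * (2 ^ Q * ρ ^ Q))) := by
        rw [← ofReal_mul (by positivity), Real.mul_rpow (by norm_num) hρ.le]
    _ ≤ ENNReal.ofReal (3 ^ α * 2 ^ Q * c * (ρ ^ Q * (d + ρ) ^ (-α))) := by
        refine ofReal_le_ofReal ?_
        calc (d / 2) ^ (-α) * (c * (2 ^ Q * ρ ^ Q))
            ≤ 3 ^ α * (d + ρ) ^ (-α) * (c * (2 ^ Q * ρ ^ Q)) :=
              mul_le_mul_of_nonneg_right hkernel (by positivity)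
          _ = 3 ^ α * 2 ^ Q * c * (ρ ^ Q * (d + ρ) ^ (-α)) := by ring

lemma setLIntegral_ball_rieszENN_le_of_dist_lt [BoundedSpace X] (hup : BallUpperBound m Q c)
    (hc : 0 ≤ c) (hD : 0 < diam (univ : Set X)) (hα : 0 ≤ α) (hαQ : α < Q) {a b : X} {r : ℝ}
    (hr : 0 < r) (hdr : dist a b < 2 * r) :
    ∫⁻ z in ball b r, rieszENN α a z ∂m
      ≤ ENNReal.ofReal (c * 2 ^ α / (1 - 2 ^ (α - Q)) * 4 ^ (Q - α) * 3 ^ α *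
        (min r (diam (univ : Set X) / 2) ^ Q *
          (dist a b + min r (diam (univ : Set X) / 2)) ^ (-α))) := by
  set D := diam (univ : Set X)
  set d := dist a b
  set ρ := min r (D / 2)
  have hρ : 0 < ρ := lt_min hr (by linarith)
  have hdD : d ≤ D := dist_le_diam_of_mem (Bornology.isBounded_univ.2 ‹_›) trivial trivial
  have hdρ : d ≤ 2 * ρ := by
    rcases le_total r (D / 2) with h | h
    · have : ρ = r := min_eq_left h
      linarith
    · have : ρ = D / 2 := min_eq_right h
      linarith
  have hsub : ball b r ⊆ ball a (4 * ρ) := by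
    intro z hz
    have hzD : dist z a ≤ D := dist_le_diam_of_mem (Bornology.isBounded_univ.2 ‹_›) trivial trivial
    rw [mem_ball]
    rcases le_total r (D / 2) with h | h
    · have : ρ = r := min_eq_left h
      linarith [dist_triangle z b a, mem_ball.1 hz, dist_comm a b]
    · have : ρ = D / 2 := min_eq_right h
      linarith
  have hkernel : ρ ^ (-α) ≤ 3 ^ α * (d + ρ) ^ (-α) :=
    rpow_neg_le_mul_rpow_neg (by positivity) (by norm_num) hα (by linarith)
  calc ∫⁻ z in ball b r, rieszENN α a z ∂m ≤ ∫⁻ z in ball a (4 * ρ), rieszENN α a z ∂m :=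
        lintegral_mono_set hsub
    _ ≤ ENNReal.ofReal (c * 2 ^ α / (1 - 2 ^ (α - Q)) * (4 * ρ) ^ (Q - α)) :=
        setLIntegral_ball_rieszENN_self_le hup hc hα hαQ a (by positivity)
    _ ≤ _ := by
        refine ofReal_le_ofReal ?_
        have : (2 : ℝ) ^ (α - Q) < 1 := Real.rpow_lt_one_of_one_lt_of_neg one_lt_two (by linarith)
        have hCW : 0 ≤ c * 2 ^ α / (1 - 2 ^ (α - Q)) := div_nonneg (by positivity) (by linarith)
        rw [Real.mul_rpow (by norm_num) hρ.le, sub_eq_add_neg Q α, Real.rpow_add hρ]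
        calc c * 2 ^ α / (1 - 2 ^ (α - Q)) * (4 ^ (Q + -α) * (ρ ^ Q * ρ ^ (-α)))
            ≤ c * 2 ^ α / (1 - 2 ^ (α - Q)) *
                (4 ^ (Q + -α) * (ρ ^ Q * (3 ^ α * (d + ρ) ^ (-α)))) := by
              gcongr
          _ = _ := by ring

lemma exists_setLIntegral_ball_rieszENN_le_mul [BoundedSpace X] {c₁ : ℝ}
    (hlow : BallLowerBound m Q c₁) (hup : BallUpperBound m Q c) (hc₁ : 0 < c₁) (hc : 0 ≤ c)
    (hD : 0 < diam (univ : Set X)) (hα : 0 ≤ α) (hαQ : α < Q) :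
    ∃ C : ℝ≥0, ∀ (a b : X) (r : ℝ), 0 < r →
      ∫⁻ z in ball b r, rieszENN α a z ∂m ≤ C * ∫⁻ z in ball a r, rieszENN α b z ∂m := by
  obtain ⟨C', hfar, hnear⟩ : ∃ C', 3 ^ α * 2 ^ Q * c ≤ C' ∧
      c * 2 ^ α / (1 - 2 ^ (α - Q)) * 4 ^ (Q - α) * 3 ^ α ≤ C' :=
    ⟨_, le_max_left _ _, le_max_right _ _⟩
  have hC' : 0 ≤ C' := hfar.trans' (by positivity)
  refine ⟨(C' / c₁).toNNReal, fun a b r hr => ?_⟩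
  set Φ := min r (diam (univ : Set X) / 2) ^ Q * (dist a b + min r (diam (univ : Set X) / 2)) ^ (-α)
  have hΦ : 0 ≤ Φ := by have := lt_min hr (half_pos hD); positivity
  have hupper : ∫⁻ z in ball b r, rieszENN α a z ∂m ≤ ENNReal.ofReal (C' * Φ) := by
    rcases le_or_gt (2 * r) (dist a b) with h | h
    · exact (setLIntegral_ball_rieszENN_le_of_le_dist hup hc (hα.trans hαQ.le) hD hα hr h).trans
        (ofReal_le_ofReal (mul_le_mul_of_nonneg_right hfar hΦ))
    · exact (setLIntegral_ball_rieszENN_le_of_dist_lt hup hc hD hα hαQ hr h).trans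
        (ofReal_le_ofReal (mul_le_mul_of_nonneg_right hnear hΦ))
  have hlower := le_setLIntegral_ball_rieszENN hlow hD hα a
    (hup.measure_singleton (hα.trans_lt hαQ) b) hr
  calc ∫⁻ z in ball b r, rieszENN α a z ∂m ≤ ENNReal.ofReal (C' * Φ) := hupper
    _ = ENNReal.ofReal (C' / c₁) * ENNReal.ofReal (c₁ * Φ) := by
        rw [← ofReal_mul (div_nonneg hC' hc₁.le)]
        congr 1; field_simp
    _ ≤ _ := mul_le_mul_right hlower _

end RieszBallIntegrals

section PoissonKernel

variable {X : Type*} [MetricSpace X]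

def poissonENN (Q y : ℝ) (x z : X) : ℝ≥0∞ :=
  ENNReal.ofReal (y ^ (-Q)) *
    ∑' k : ℕ, ENNReal.ofReal (2 ^ (-(Q + 1))) ^ k * (ball x (2 ^ k * y)).indicator 1 z

variable {Q y : ℝ}

lemma poissonENN_comm (x z : X) : poissonENN Q y x z = poissonENN Q y z x := by
  unfold poissonENN
  congr 1
  refine tsum_congr fun k => congrArg _ ?_
  by_cases h : z ∈ ball x (2 ^ k * y)
  · rw [indicator_of_mem h, indicator_of_mem (mem_ball_comm.1 h)]; rfl
  · rw [indicator_of_notMem h, indicator_of_notMem (mt mem_ball_comm.1 h)]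

lemma exists_poissonENN_le (hQ : 0 < Q + 1) :
    ∃ B : ℝ≥0∞, B ≠ ⊤ ∧ ∀ x z : X, poissonENN Q y x z ≤ B := by
  have hq : ENNReal.ofReal (2 ^ (-(Q + 1))) < 1 :=
    ofReal_lt_one.2 (Real.rpow_lt_one_of_one_lt_of_neg one_lt_two (by linarith))
  refine ⟨ENNReal.ofReal (y ^ (-Q)) * (1 - ENNReal.ofReal (2 ^ (-(Q + 1))))⁻¹,
    mul_ne_top ofReal_ne_top (inv_ne_top.2 (tsub_pos_of_lt hq).ne'), fun x z => ?_⟩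
  rw [poissonENN, ← ENNReal.tsum_geometric]
  gcongr with k
  exact mul_le_of_le_one_right zero_le (indicator_apply_le' (fun _ => le_rfl) fun _ => zero_le)

lemma dyadicPoissonKernel_nonneg (hy : 0 ≤ y) (x z : X) : 0 ≤ dyadicPoissonKernel Q x y z :=
  mul_nonneg (Real.rpow_nonneg hy _) (tsum_nonneg fun _ =>
    mul_nonneg (Real.rpow_nonneg zero_le_two _) (indicator_nonneg (fun _ _ => zero_le_one) _))

lemma ofReal_dyadicPoissonKernel (hQ : 0 < Q + 1) (hy : 0 ≤ y) (x z : X) :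
    ENNReal.ofReal (dyadicPoissonKernel Q x y z) = poissonENN Q y x z := by
  have hq : (2 : ℝ) ^ (-(Q + 1)) < 1 := Real.rpow_lt_one_of_one_lt_of_neg one_lt_two (by linarith)
  have hpow : ∀ k : ℕ, (2 : ℝ) ^ (-((Q + 1) * k)) = ((2 : ℝ) ^ (-(Q + 1))) ^ k := fun k => by
    rw [← Real.rpow_natCast, ← Real.rpow_mul zero_le_two, neg_mul]
  have hterm : ∀ k : ℕ,
      0 ≤ (2 : ℝ) ^ (-((Q + 1) * k)) * (ball x (2 ^ k * y)).indicator (fun _ => (1 : ℝ)) z :=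
    fun k => mul_nonneg (Real.rpow_nonneg zero_le_two _)
      (indicator_nonneg (fun _ _ => zero_le_one) _)
  have hsum : Summable fun k : ℕ =>
      (2 : ℝ) ^ (-((Q + 1) * k)) * (ball x (2 ^ k * y)).indicator (fun _ => (1 : ℝ)) z :=
    Summable.of_nonneg_of_le hterm (fun k => by
      rw [hpow]
      exact mul_le_of_le_one_right (by positivity)
        (indicator_apply_le' (fun _ => le_rfl) fun _ => zero_le_one))
      (summable_geometric_of_lt_one (by positivity) hq)
  rw [dyadicPoissonKernel, poissonENN, ofReal_mul (Real.rpow_nonneg hy _),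
    ofReal_tsum_of_nonneg hterm hsum]
  congr 1
  refine tsum_congr fun k => ?_
  rw [ofReal_mul (Real.rpow_nonneg zero_le_two _), hpow, ofReal_pow (by positivity)]
  by_cases h : z ∈ ball x (2 ^ k * y) <;> simp [h]

variable [MeasurableSpace X] [OpensMeasurableSpace X]

lemma measurable_poissonENN [SecondCountableTopology X] :
    Measurable (uncurry (poissonENN (X := X) Q y)) := by
  refine measurable_const.mul (Measurable.tsum fun k => measurable_const.mul ?_)
  have hs : MeasurableSet {p : X × X | dist p.2 p.1 < 2 ^ k * y} :=
    measurableSet_lt (measurable_snd.dist measurable_fst) measurable_const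
  have he : (fun p : X × X => (ball p.1 (2 ^ k * y)).indicator (1 : X → ℝ≥0∞) p.2)
      = {p : X × X | dist p.2 p.1 < 2 ^ k * y}.indicator 1 := by
    ext p; simp only [indicator, mem_ball, mem_ofPred_eq, Pi.one_apply]
  exact he ▸ measurable_one.indicator hs

variable {m : Measure X}

lemma lintegral_mul_poissonENN {f : X → ℝ≥0∞} (hf : Measurable f) (b : X) :
    ∫⁻ z, f z * poissonENN Q y b z ∂m = ENNReal.ofReal (y ^ (-Q)) *
      ∑' k : ℕ, ENNReal.ofReal (2 ^ (-(Q + 1))) ^ k * ∫⁻ z in ball b (2 ^ k * y), f z ∂m := by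
  have hpt : ∀ z, f z * poissonENN Q y b z = ENNReal.ofReal (y ^ (-Q)) *
      ∑' k : ℕ, ENNReal.ofReal (2 ^ (-(Q + 1))) ^ k * (ball b (2 ^ k * y)).indicator f z := by
    intro z
    rw [poissonENN, mul_left_comm, ← ENNReal.tsum_mul_left]
    congr 1
    refine tsum_congr fun k => ?_
    rw [mul_left_comm]
    by_cases h : z ∈ ball b (2 ^ k * y) <;> simp [h]
  simp_rw [hpt]
  rw [lintegral_const_mul' _ _ ofReal_ne_top, lintegral_tsum fun k =>
    ((hf.indicator measurableSet_ball).const_mul _).aemeasurable]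
  simp_rw [lintegral_const_mul' _ _ (pow_ne_top ofReal_ne_top),
    lintegral_indicator measurableSet_ball]

lemma lintegral_poissonENN (x : X) :
    ∫⁻ z, poissonENN Q y x z ∂m = ENNReal.ofReal (y ^ (-Q)) *
      ∑' k : ℕ, ENNReal.ofReal (2 ^ (-(Q + 1))) ^ k * m (ball x (2 ^ k * y)) := by
  simpa only [one_mul, setLIntegral_one] using
    lintegral_mul_poissonENN (m := m) (Q := Q) (y := y) (f := fun _ => 1) measurable_const x

lemma lintegral_mul_poissonENN_le_mul {f g : X → ℝ≥0∞} (hf : Measurable f) (hg : Measurable g)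
    {a b : X} {C : ℝ≥0∞} (hy : 0 < y)
    (hfg : ∀ r, 0 < r → ∫⁻ z in ball b r, f z ∂m ≤ C * ∫⁻ z in ball a r, g z ∂m) :
    ∫⁻ z, f z * poissonENN Q y b z ∂m ≤ C * ∫⁻ z, g z * poissonENN Q y a z ∂m := by
  set q := ENNReal.ofReal (2 ^ (-(Q + 1)))
  calc ∫⁻ z, f z * poissonENN Q y b z ∂m
      = ENNReal.ofReal (y ^ (-Q)) * ∑' k : ℕ, q ^ k * ∫⁻ z in ball b (2 ^ k * y), f z ∂m :=
        lintegral_mul_poissonENN hf b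
    _ ≤ ENNReal.ofReal (y ^ (-Q)) * ∑' k : ℕ, q ^ k * (C * ∫⁻ z in ball a (2 ^ k * y), g z ∂m) := by
        gcongr with k; exact hfg _ (by positivity)
    _ = C * ∫⁻ z, g z * poissonENN Q y a z ∂m := by
        simp_rw [mul_left_comm _ C, ENNReal.tsum_mul_left, lintegral_mul_poissonENN hg a]
        ring

lemma ofReal_le_lintegral_poissonENN {c : ℝ} (hlow : BallLowerBound m Q c)
    (hD : 0 < diam (univ : Set X)) (hy : 0 < y) (x : X) :
    ENNReal.ofReal (c * (y ^ (-Q) * min y (diam (univ : Set X) / 2) ^ Q))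
      ≤ ∫⁻ z, poissonENN Q y x z ∂m := by
  set ρ := min y (diam (univ : Set X) / 2)
  have hρ : 0 < ρ := lt_min hy (by linarith)
  have hρD : ρ < diam (univ : Set X) := (min_le_right _ _).trans_lt (by linarith)
  have hfirst : m (ball x y)
      ≤ ∑' k : ℕ, ENNReal.ofReal (2 ^ (-(Q + 1))) ^ k * m (ball x (2 ^ k * y)) := by
    simpa using ENNReal.le_tsum
      (f := fun k : ℕ => ENNReal.ofReal (2 ^ (-(Q + 1))) ^ k * m (ball x (2 ^ k * y))) 0
  rw [lintegral_poissonENN]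
  calc ENNReal.ofReal (c * (y ^ (-Q) * ρ ^ Q))
      = ENNReal.ofReal (y ^ (-Q)) * ENNReal.ofReal (c * ρ ^ Q) := by
        rw [← ofReal_mul (Real.rpow_nonneg hy.le _)]; ring_nf
    _ ≤ ENNReal.ofReal (y ^ (-Q)) * m (ball x y) :=
        mul_le_mul_right ((hlow x ρ hρ hρD).trans
          (measure_mono (ball_subset_ball (min_le_left _ _)))) _
    _ ≤ _ := mul_le_mul_right hfirst _

lemma lintegral_poissonENN_le {c : ℝ} (hup : BallUpperBound m Q c) (hc : 0 ≤ c) (hQ : 0 ≤ Q)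
    (hy : 0 < y) (x : X) :
    ∫⁻ z, poissonENN Q y x z ∂m
      ≤ ENNReal.ofReal (2 ^ (Q + 1) * c * (y ^ (-Q) * min y (diam (univ : Set X) / 2) ^ Q)) := by
  set D := diam (univ : Set X)
  set ρ := min y (D / 2)
  have hρ : 0 ≤ ρ := le_min hy.le (by linarith [diam_nonneg (s := (univ : Set X))])
  have hterm : ∀ k : ℕ, ENNReal.ofReal (2 ^ (-(Q + 1))) ^ k * m (ball x (2 ^ k * y))
      ≤ ENNReal.ofReal (c * 2 ^ Q * ρ ^ Q * (1 / 2) ^ k) := by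
    intro k
    have hmin : min (2 ^ k * y) D ≤ 2 ^ (k + 1) * ρ := by
      rw [pow_succ, mul_comm _ (2 : ℝ)]
      exact min_mul_le_two_mul_mul_min_half (one_le_pow₀ one_le_two) hy.le diam_nonneg
    have h2 : (2 : ℝ) ^ (-(Q + 1) * k) * 2 ^ (((k + 1 : ℕ) : ℝ) * Q) = 2 ^ Q * (1 / 2) ^ k := by
      rw [← Real.rpow_add two_pos, one_div, inv_pow, ← Real.rpow_natCast,
        ← Real.rpow_neg zero_le_two, ← Real.rpow_add two_pos]
      push_cast; ring_nf
    calc ENNReal.ofReal (2 ^ (-(Q + 1))) ^ k * m (ball x (2 ^ k * y))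
        ≤ ENNReal.ofReal (2 ^ (-(Q + 1))) ^ k * ENNReal.ofReal (c * (2 ^ (k + 1) * ρ) ^ Q) :=
          mul_le_mul_right ((hup x _ (by positivity)).trans (ofReal_le_ofReal
            (mul_le_mul_of_nonneg_left
              (Real.rpow_le_rpow (le_min (by positivity) diam_nonneg) hmin hQ) hc))) _
      _ = ENNReal.ofReal (c * 2 ^ Q * ρ ^ Q * (1 / 2) ^ k) := by
          rw [← ofReal_pow (by positivity), ← ofReal_mul (by positivity)]
          congr 1
          rw [Real.mul_rpow (by positivity) hρ, ← Real.rpow_natCast (2 : ℝ) (k + 1),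
            ← Real.rpow_mul zero_le_two, ← Real.rpow_natCast _ k, ← Real.rpow_mul zero_le_two]
          linear_combination (c * ρ ^ Q) * h2
  rw [lintegral_poissonENN]
  calc ENNReal.ofReal (y ^ (-Q)) *
        ∑' k : ℕ, ENNReal.ofReal (2 ^ (-(Q + 1))) ^ k * m (ball x (2 ^ k * y))
      ≤ ENNReal.ofReal (y ^ (-Q)) * ∑' k : ℕ, ENNReal.ofReal (c * 2 ^ Q * ρ ^ Q * (1 / 2) ^ k) := by
        gcongr with k; exact hterm k
    _ = ENNReal.ofReal (2 ^ (Q + 1) * c * (y ^ (-Q) * ρ ^ Q)) := by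
        rw [tsum_ofReal_mul_geometric (by positivity) (by norm_num) (by norm_num),
          ← ofReal_mul (Real.rpow_nonneg hy.le _), Real.rpow_add two_pos, Real.rpow_one]
        ring_nf

lemma exists_inv_lintegral_poissonENN_le_mul {c₁ c : ℝ} (hlow : BallLowerBound m Q c₁)
    (hup : BallUpperBound m Q c) (hc₁ : 0 < c₁) (hc : 0 < c) (hQ : 0 ≤ Q)
    (hD : 0 < diam (univ : Set X)) :
    ∃ C : ℝ≥0, ∀ y, 0 < y → ∀ z w : X,
      (∫⁻ v, poissonENN Q y z v ∂m)⁻¹ ≤ C * (∫⁻ v, poissonENN Q y w v ∂m)⁻¹ := by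
  refine ⟨(2 ^ (Q + 1) * c / c₁).toNNReal, fun y hy z w => ?_⟩
  have hℓ : 0 < y ^ (-Q) * min y (diam (univ : Set X) / 2) ^ Q := by
    have := lt_min hy (half_pos hD); positivity
  refine inv_le_ofReal_mul_inv (mul_pos hc₁ hℓ) (by positivity)
    (ofReal_le_lintegral_poissonENN hlow hD hy z)
    ((lintegral_poissonENN_le hup hc.le hQ hy w).trans_eq ?_)
  congr 1; field_simp

end PoissonKernel

section RealPotentials

variable {X : Type*} [MeasurableSpace X] {m : Measure X}

lemma potential_congr_ae {K : X → X → ℝ} {f g : X → ℝ} (h : f =ᵐ[m] g) :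
    potential m K f = potential m K g :=
  funext fun _ => integral_congr_ae (h.mono fun z hz => by simp only [hz])

lemma exists_measurable_nonneg_ae_eq {f : X → ℝ} (hf : AEStronglyMeasurable f m)
    (hf0 : ∀ᵐ z ∂m, 0 ≤ f z) : ∃ g : X → ℝ, Measurable g ∧ f =ᵐ[m] g ∧ ∀ z, 0 ≤ g z :=
  ⟨fun z => max (hf.mk f z) 0, hf.stronglyMeasurable_mk.measurable.max measurable_const,
    (hf.ae_eq_mk.and hf0).mono fun z hz => by
      show f z = max (hf.mk f z) 0; rw [← hz.1, max_eq_left hz.2],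
    fun _ => le_max_right _ _⟩

lemma potential_toReal {K : X → X → ℝ} {x : X} (hK0 : ∀ z, 0 ≤ K x z) (hKm : Measurable (K x))
    {G : X → ℝ≥0∞} (hG : Measurable G) (hGfin : ∀ᵐ z ∂m, G z ≠ ⊤) :
    potential m K (fun z => (G z).toReal) x
      = (lpotential m (fun a z => ENNReal.ofReal (K a z)) G x).toReal := by
  rw [potential, integral_eq_lintegral_of_nonneg_ae (Eventually.of_forall fun z =>
    mul_nonneg (hK0 z) toReal_nonneg) (hKm.mul hG.ennreal_toReal).aestronglyMeasurable]
  congr 1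
  refine lintegral_congr_ae ?_
  filter_upwards [hGfin] with z hz
  rw [ofReal_mul (hK0 z), ofReal_toReal hz]

variable [MetricSpace X]

lemma PI_congr_ae {f g : X → ℝ} (h : f =ᵐ[m] g) (Q : ℝ) : PI m Q f = PI m Q g :=
  funext fun _ => funext fun _ => by
    unfold PI
    congr 1
    exact integral_congr_ae (h.mono fun z hz => by simp only [hz])

lemma PI_toReal [OpensMeasurableSpace X] [SecondCountableTopology X] {Q y : ℝ} (hQ : 0 < Q + 1)
    (hy : 0 ≤ y) {G : X → ℝ≥0∞} (hG : Measurable G) (hGfin : ∀ᵐ z ∂m, G z ≠ ⊤) (x : X) :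
    PI m Q (fun z => (G z).toReal) x y = (lnormalizedPotential m (poissonENN Q y) G x).toReal := by
  have hD : (fun z => dyadicPoissonKernel Q x y z) = fun z => (poissonENN Q y x z).toReal :=
    funext fun z => by
      rw [← ofReal_dyadicPoissonKernel hQ hy, toReal_ofReal (dyadicPoissonKernel_nonneg hy x z)]
  have hDm : Measurable fun z => dyadicPoissonKernel Q x y z :=
    hD ▸ measurable_poissonENN.of_uncurry_left.ennreal_toReal
  have hmass : ∫ z, dyadicPoissonKernel Q x y z ∂m = (∫⁻ z, poissonENN Q y x z ∂m).toReal := by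
    rw [integral_eq_lintegral_of_nonneg_ae (Eventually.of_forall (dyadicPoissonKernel_nonneg hy x))
      hDm.aestronglyMeasurable]
    simp_rw [ofReal_dyadicPoissonKernel hQ hy]
  have hint : ∫ z, dyadicPoissonKernel Q x y z * (G z).toReal ∂m
      = (lpotential m (poissonENN Q y) G x).toReal := by
    have := potential_toReal (m := m) (K := fun a z => dyadicPoissonKernel Q a y z)
      (dyadicPoissonKernel_nonneg hy x) hDm hG hGfin
    simp_rw [ofReal_dyadicPoissonKernel hQ hy] at this
    exact this
  rw [PI, hmass, hint, lnormalizedPotential, toReal_mul, toReal_inv]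

lemma potential_rieszKernel_eq_zero [BoundedSpace X] {Q s : ℝ} (hD : diam (univ : Set X) ≤ 0)
    (hQs : Q * s ≠ 0) (f : X → ℝ) : potential m (rieszKernel Q s) f = 0 := by
  have hdist : ∀ a b : X, dist a b = 0 := fun a b => le_antisymm
    ((dist_le_diam_of_mem (Bornology.isBounded_univ.2 ‹_›) trivial trivial).trans hD) dist_nonneg
  funext x
  simp [potential, rieszKernel, hdist, Real.zero_rpow (neg_ne_zero.2 hQs)]

variable [OpensMeasurableSpace X] [SecondCountableTopology X] [SFinite m] {Q s y : ℝ}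
  {g : X → ℝ}

lemma potential_rieszKernel_PI_eq (hQ : 0 < Q + 1) (hy : 0 ≤ y) (hg : Measurable g)
    (hg0 : ∀ z, 0 ≤ g z)
    (hfin : ∀ z, lnormalizedPotential m (poissonENN Q y) (fun w => ENNReal.ofReal (g w)) z ≠ ⊤)
    (x : X) :
    potential m (rieszKernel Q s) (fun z => PI m Q g z y) x
      = (lpotential m (rieszENN (Q * s))
          (lnormalizedPotential m (poissonENN Q y) fun w => ENNReal.ofReal (g w)) x).toReal := by
  have hg' : g = fun z => (ENNReal.ofReal (g z)).toReal :=
    funext fun z => (toReal_ofReal (hg0 z)).symm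
  have hPI : (fun z => PI m Q g z y) = fun z =>
      (lnormalizedPotential m (poissonENN Q y) (fun w => ENNReal.ofReal (g w)) z).toReal :=
    funext fun z => by
      have := PI_toReal (m := m) hQ hy hg.ennreal_ofReal (ae_of_all _ fun _ => ofReal_ne_top) z
      rwa [← hg'] at this
  rw [hPI]
  exact potential_toReal (rieszKernel_nonneg Q s x) (measurable_rieszKernel Q s x)
    (measurable_lnormalizedPotential measurable_poissonENN hg.ennreal_ofReal) (ae_of_all _ hfin)

lemma PI_potential_rieszKernel_eq (hQ : 0 < Q + 1) (hy : 0 ≤ y) (hg : Measurable g)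
    (hg0 : ∀ z, 0 ≤ g z)
    (hfin : ∀ᵐ w ∂m, lpotential m (rieszENN (Q * s)) (fun v => ENNReal.ofReal (g v)) w ≠ ⊤)
    (x : X) :
    PI m Q (potential m (rieszKernel Q s) g) x y
      = (lnormalizedPotential m (poissonENN Q y)
          (lpotential m (rieszENN (Q * s)) fun v => ENNReal.ofReal (g v)) x).toReal := by
  have hg' : g = fun z => (ENNReal.ofReal (g z)).toReal :=
    funext fun z => (toReal_ofReal (hg0 z)).symm
  have hpot : potential m (rieszKernel Q s) g = fun w =>
      (lpotential m (rieszENN (Q * s)) (fun v => ENNReal.ofReal (g v)) w).toReal :=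
    funext fun w => by
      have := potential_toReal (m := m) (rieszKernel_nonneg Q s w) (measurable_rieszKernel Q s w)
        hg.ennreal_ofReal (ae_of_all _ fun _ => ofReal_ne_top)
      rwa [← hg'] at this
  rw [hpot]
  exact PI_toReal hQ hy (measurable_lpotential (measurable_rieszENN _) hg.ennreal_ofReal) hfin x

end RealPotentials

theorem exists_potential_PI_comparable {X : Type*} [MetricSpace X] [CompactSpace X]
    [MeasurableSpace X] [OpensMeasurableSpace X] {m : Measure X} [SFinite m] {Q s κ₁ κ₂ : ℝ}
    (hlow : BallLowerBound m Q κ₁) (hup : BallUpperBound m Q κ₂) (hκ₁ : 0 < κ₁) (hκ₂ : 0 < κ₂)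
    (hD : 0 < diam (univ : Set X)) (hQ : 0 < Q) (hs0 : 0 ≤ s) (hs1 : s < 1) :
    ∃ c₁ c₂ : ℝ, 0 < c₁ ∧ c₁ ≤ c₂ ∧
      ∀ g : X → ℝ, Measurable g → (∀ z, 0 ≤ g z) → Integrable g m →
        ∀ (x : X) (y : ℝ), 0 < y →
          c₁ * PI m Q (potential m (rieszKernel Q s) g) x y ≤
              potential m (rieszKernel Q s) (fun z => PI m Q g z y) x ∧
            potential m (rieszKernel Q s) (fun z => PI m Q g z y) x ≤
              c₂ * PI m Q (potential m (rieszKernel Q s) g) x y := by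
  have hα : 0 ≤ Q * s := mul_nonneg hQ.le hs0
  have hαQ : Q * s < Q := mul_lt_of_lt_one_right hQ hs1
  have hk := measurable_rieszENN (X := X) (Q * s)
  obtain ⟨C₁, hN⟩ := exists_inv_lintegral_poissonENN_le_mul hlow hup hκ₁ hκ₂ hQ.le hD
  obtain ⟨C₂, hJ⟩ := exists_setLIntegral_ball_rieszENN_le_mul hlow hup hκ₁ hκ₂.le hD hα hαQ
  have hK : (1 : ℝ) ≤ max ((C₁ * C₂ : ℝ≥0) : ℝ) 1 := le_max_right _ _
  refine ⟨_, _, inv_pos.2 (one_pos.trans_le hK), (inv_le_one_of_one_le₀ hK).trans hK,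
    fun g hgm hg0 hgi x y hy => ?_⟩
  set F := fun z => ENNReal.ofReal (g z)
  have hF : Measurable F := hgm.ennreal_ofReal
  have hFint : ∫⁻ z, F z ∂m ≠ ⊤ := hgi.lintegral_lt_top.ne
  obtain ⟨B, hB, hPB⟩ := exists_poissonENN_le (X := X) (by linarith : 0 < Q + 1) (y := y)
  have hN0 : ∀ z, ∫⁻ v, poissonENN Q y z v ∂m ≠ 0 := fun z => by
    have := lt_min hy (half_pos hD)
    exact ((ofReal_pos.2 (by positivity)).trans_le
      (ofReal_le_lintegral_poissonENN hlow hD hy z)).ne'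
  have hTint : ∫⁻ w, lpotential m (rieszENN (Q * s)) F w ∂m ≠ ⊤ :=
    ne_top_of_le_ne_top (mul_ne_top ofReal_ne_top hFint) (lintegral_lpotential_le hk hF fun z => by
      simpa only [rieszENN_comm _ _ z] using lintegral_rieszENN_le hup hκ₂.le hα hαQ hD z)
  rw [potential_rieszKernel_PI_eq (by linarith) hy.le hgm hg0
      (fun z => lnormalizedPotential_ne_top (hN0 z) hB (hPB z) hFint),
    PI_potential_rieszKernel_eq (by linarith) hy.le hgm hg0
      ((ae_lt_top (measurable_lpotential hk hF) hTint).mono fun _ h => h.ne)]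
  obtain ⟨hle, hge⟩ := lpotential_lnormalizedPotential_comparable hk measurable_poissonENN hF
    (rieszENN_comm _) poissonENN_comm (hN y hy) (fun a b =>
      lintegral_mul_poissonENN_le_mul hk.of_uncurry_left hk.of_uncurry_left hy (hJ a b)) x
  exact toReal_comparable (lnormalizedPotential_ne_top (hN0 x) hB (hPB x) hTint) hle hge

/-- **Exchanging the order of the dyadic Poisson integral and of the Riesz
potential.**  On a compact Ahlfors `Q`-regular space there are
`0 < c₁ ≤ c₂ < ∞`, depending only on `X`, `Q` and `s`, such that for every
nonnegative `f ∈ L^p(X,m)`, every `x ∈ X` and every `y > 0`: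
`c₁ · PI(K_{X,s}*f)(x,y) ≤ (K_{X,s} * PI(f)(·,y))(x) ≤ c₂ · PI(K_{X,s}*f)(x,y)`. -/
theorem riesz_potential_poisson_integral_commute
    {X : Type*} [MetricSpace X] [CompactSpace X] [MeasurableSpace X] [BorelSpace X]
    (m : Measure X) (Q : ℝ) (hQ : 0 < Q) (hAhl : IsAhlfors m Q)
    (p p' s : ℝ) (hp : 1 < p) (hp' : 1 / p + 1 / p' = 1)
    (hs1 : 1 / p' ≤ s) (hs2 : s < 1) :
    ∃ c₁ c₂ : ℝ, 0 < c₁ ∧ c₁ ≤ c₂ ∧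
      ∀ f : X → ℝ, MemLp f (ENNReal.ofReal p) m → (∀ z, 0 ≤ f z) →
        ∀ (x : X) (y : ℝ), 0 < y →
          c₁ * PI m Q (potential m (rieszKernel Q s) f) x y ≤
              potential m (rieszKernel Q s) (fun z => PI m Q f z y) x ∧
            potential m (rieszKernel Q s) (fun z => PI m Q f z y) x ≤
              c₂ * PI m Q (potential m (rieszKernel Q s) f) x y := by
  have hs : 0 < s := by
    have : 1 / p < 1 := (div_lt_one (by linarith)).2 hp
    linarith
  rcases le_or_gt (diam (univ : Set X)) 0 with hD | hD
  · -- `X` has at most one point, and the Riesz kernel is `0 ^ (-(Q * s)) = 0`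
    refine ⟨1, 1, one_pos, le_rfl, fun f _ _ x y _ => ?_⟩
    simp [potential_rieszKernel_eq_zero hD (mul_pos hQ hs).ne', PI]
  have := hAhl.isFiniteMeasure hD
  obtain ⟨κ₁, κ₂, hκ₁, hκ₂, hlow, hup⟩ := hAhl.exists_ballBounds hD
  obtain ⟨c₁, c₂, hc₁, hc₁₂, hcomp⟩ :=
    exists_potential_PI_comparable hlow hup hκ₁ hκ₂ hD hQ hs.le hs2
  refine ⟨c₁, c₂, hc₁, hc₁₂, fun f hf hf0 x y hy => ?_⟩
  obtain ⟨g, hgm, hfg, hg0⟩ := exists_measurable_nonneg_ae_eq hf.1 (ae_of_all _ hf0)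
  rw [potential_congr_ae hfg, PI_congr_ae hfg]
  exact hcomp g hgm hg0 ((hf.integrable (one_le_ofReal.2 hp.le)).congr hfg) x y hy

end
end

section
/- Let (X,d,m) be a compact Ahlfors Q-regular space, let p > 1 with 1/p + 1/p' = 1, and let 1/p' ≤ s < 1. Let f ∈ L^p(X,m) with f ≥ 0 and let ε > 0. Define E(f,ε) := { (x,y) ∈ X×(0,∞) : PI(K_{X,s}*f)(x,y) > ε } and E'(f,ε) := ∪_{(x,y)∈E(f,ε)} B_d(x,y)×{y} ⊆ X×(0,∞). Then there exists a constant c > 0, depending only on X and Q, such that PI(K_{X,s}*f)(x,y) ≥ c·ε for all (x,y) ∈ E'(f,ε). -/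
noncomputable section

open MeasureTheory ENNReal NNReal

/-!
Moving the centre of the dyadic Poisson kernel by less than `y` costs at most one dyadic
scale: `B(x', 2^k y) ⊆ B(x, 2^(k+1) y)`, so the kernels centred at `x` and `x'` are comparable
with constant `2^(Q+1)`. Since `K_{X,s} * f ≥ 0`, the normalised averages defining
`PI (K_{X,s} * f)` at `(x, y)` and `(x', y)` are then comparable with constant `2^(-2(Q+1))`.
-/

section WeightedAverage

variable {α : Type*} [MeasurableSpace α] {μ : Measure α} {w w' g : α → ℝ} {A : ℝ}

theorem integrable_mul_of_le_const_mul (hw : Measurable w) (hw' : Measurable w')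
    (hw'_pos : ∀ z, 0 < w' z) (hw_nonneg : ∀ z, 0 ≤ w z) (hle : ∀ z, w z ≤ A * w' z)
    (hint : Integrable (fun z => w' z * g z) μ) : Integrable (fun z => w z * g z) μ := by
  have hratio : ∀ z, ‖w z / w' z‖ ≤ A := fun z => by
    rw [Real.norm_of_nonneg (div_nonneg (hw_nonneg z) (hw'_pos z).le),
      div_le_iff₀ (hw'_pos z)]
    exact hle z
  refine (hint.bdd_mul (hw.div hw').aestronglyMeasurable (ae_of_all _ hratio)).congr
    (ae_of_all _ fun z => ?_)
  simp only [Pi.div_apply, ← mul_assoc, div_mul_cancel₀ _ (hw'_pos z).ne']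

theorem weighted_average_le_of_comparable (hw : Measurable w) (hw' : Measurable w')
    (hA : 0 < A) (hw'_pos : ∀ z, 0 < w' z) (hg : ∀ z, 0 ≤ g z)
    (hle : ∀ z, w z ≤ A * w' z) (hle' : ∀ z, w' z ≤ A * w z) :
    A⁻¹ * A⁻¹ * ((∫ z, w' z ∂μ)⁻¹ * ∫ z, w' z * g z ∂μ) ≤
      (∫ z, w z ∂μ)⁻¹ * ∫ z, w z * g z ∂μ := by
  have hw_pos : ∀ z, 0 < w z := fun z =>
    pos_of_mul_pos_right ((hw'_pos z).trans_le (hle' z)) hA.le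
  have hRHS : 0 ≤ (∫ z, w z ∂μ)⁻¹ * ∫ z, w z * g z ∂μ :=
    mul_nonneg (inv_nonneg.2 (integral_nonneg fun z => (hw_pos z).le))
      (integral_nonneg fun z => mul_nonneg (hw_pos z).le (hg z))
  -- A vanishing (e.g. non-integrable, hence junk) integral at `w'` makes the left side `0`.
  rcases (integral_nonneg fun z => (hw'_pos z).le : 0 ≤ ∫ z, w' z ∂μ).eq_or_lt with hI' | hI'
  · simpa [← hI'] using hRHS
  rcases (integral_nonneg fun z => mul_nonneg (hw'_pos z).le (hg z) :
    0 ≤ ∫ z, w' z * g z ∂μ).eq_or_lt with hJ' | hJ'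
  · simpa [← hJ'] using hRHS
  have hint_w' : Integrable w' μ := .of_integral_ne_zero hI'.ne'
  have hint_w'g : Integrable (fun z => w' z * g z) μ := .of_integral_ne_zero hJ'.ne'
  have hint_w : Integrable w μ := by
    simpa using integrable_mul_of_le_const_mul (g := fun _ => (1 : ℝ)) hw hw' hw'_pos
      (fun z => (hw_pos z).le) hle (by simpa using hint_w')
  have hint_wg : Integrable (fun z => w z * g z) μ :=
    integrable_mul_of_le_const_mul hw hw' hw'_pos (fun z => (hw_pos z).le) hle hint_w'g
  have hI : ∫ z, w z ∂μ ≤ A * ∫ z, w' z ∂μ := by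
    rw [← integral_const_mul]
    exact integral_mono hint_w (hint_w'.const_mul A) hle
  have hI_pos : 0 < ∫ z, w z ∂μ := by
    refine (by positivity : 0 < A⁻¹ * ∫ z, w' z ∂μ).trans_le ?_
    rw [← integral_const_mul]
    exact integral_mono (hint_w'.const_mul _) hint_w fun z => (inv_mul_le_iff₀ hA).2 (hle' z)
  have hJ : A⁻¹ * ∫ z, w' z * g z ∂μ ≤ ∫ z, w z * g z ∂μ := by
    rw [← integral_const_mul]
    refine integral_mono (hint_w'g.const_mul A⁻¹) hint_wg fun z => ?_
    rw [inv_mul_le_iff₀ hA, ← mul_assoc]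
    exact mul_le_mul_of_nonneg_right (hle' z) (hg z)
  calc A⁻¹ * A⁻¹ * ((∫ z, w' z ∂μ)⁻¹ * ∫ z, w' z * g z ∂μ)
      = (A * ∫ z, w' z ∂μ)⁻¹ * (A⁻¹ * ∫ z, w' z * g z ∂μ) := by rw [mul_inv]; ring
    _ ≤ (∫ z, w z ∂μ)⁻¹ * ∫ z, w z * g z ∂μ :=
        mul_le_mul (inv_anti₀ hI_pos hI) hJ (by positivity) (inv_nonneg.2 hI_pos.le)

end WeightedAverage

section DyadicPoissonKernel

variable {X : Type*} [MetricSpace X] {Q y : ℝ} {x x' z : X}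

def dyadicTerm (Q : ℝ) (x : X) (y : ℝ) (z : X) (k : ℕ) : ℝ :=
  (2 : ℝ) ^ (-((Q + 1) * (k : ℝ))) * (Metric.ball x (2 ^ k * y)).indicator (fun _ => (1 : ℝ)) z

theorem dyadicPoissonKernel_eq :
    dyadicPoissonKernel Q x y z = y ^ (-Q) * ∑' k, dyadicTerm Q x y z k := rfl

theorem dyadicTerm_nonneg (k : ℕ) : 0 ≤ dyadicTerm Q x y z k :=
  mul_nonneg (by positivity) (Set.indicator_nonneg (fun _ _ => zero_le_one) z)

theorem dyadicTerm_le (k : ℕ) : dyadicTerm Q x y z k ≤ ((2 : ℝ) ^ (-(Q + 1))) ^ k := by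
  rw [← Real.rpow_natCast, ← Real.rpow_mul zero_le_two, neg_mul]
  exact mul_le_of_le_one_right (by positivity) (Set.indicator_le_self' (fun _ _ => zero_le_one) z)

theorem summable_dyadicTerm (hQ : -1 < Q) : Summable (dyadicTerm Q x y z) :=
  (summable_geometric_of_lt_one (by positivity)
    (Real.rpow_lt_one_of_one_lt_of_neg one_lt_two (by linarith))).of_nonneg_of_le
    dyadicTerm_nonneg dyadicTerm_le

theorem dyadicTerm_le_two_rpow_mul_succ (hd : dist x x' < y) (k : ℕ) :
    dyadicTerm Q x' y z k ≤ 2 ^ (Q + 1) * dyadicTerm Q x y z (k + 1) := by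
  have hy : 0 ≤ y := dist_nonneg.trans hd.le
  have hball : Metric.ball x' (2 ^ k * y) ⊆ Metric.ball x (2 ^ (k + 1) * y) := by
    refine Metric.ball_subset_ball' ?_
    rw [dist_comm, pow_succ]
    nlinarith [one_le_pow₀ (one_le_two : (1 : ℝ) ≤ 2) (n := k)]
  have hcoef : (2 : ℝ) ^ (-((Q + 1) * (k : ℝ))) =
      2 ^ (Q + 1) * 2 ^ (-((Q + 1) * ((k + 1 : ℕ) : ℝ))) := by
    rw [← Real.rpow_add zero_lt_two]
    push_cast
    ring_nf
  rw [dyadicTerm, dyadicTerm, hcoef, mul_assoc]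
  gcongr

theorem dyadicPoissonKernel_le_of_dist_lt (hQ : -1 < Q) (hd : dist x x' < y) :
    dyadicPoissonKernel Q x' y z ≤ 2 ^ (Q + 1) * dyadicPoissonKernel Q x y z := by
  have hsum := summable_dyadicTerm (x := x) (y := y) (z := z) hQ
  have hshift : ∑' k, dyadicTerm Q x y z (k + 1) ≤ ∑' k, dyadicTerm Q x y z k :=
    tsum_comp_le_tsum_of_inj hsum dyadicTerm_nonneg (add_left_injective 1)
  have hseries : ∑' k, dyadicTerm Q x' y z k ≤ 2 ^ (Q + 1) * ∑' k, dyadicTerm Q x y z k :=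
    calc ∑' k, dyadicTerm Q x' y z k
        ≤ ∑' k, 2 ^ (Q + 1) * dyadicTerm Q x y z (k + 1) :=
          (summable_dyadicTerm hQ).tsum_le_tsum (dyadicTerm_le_two_rpow_mul_succ hd)
            (((_root_.summable_nat_add_iff 1).2 hsum).mul_left _)
      _ ≤ 2 ^ (Q + 1) * ∑' k, dyadicTerm Q x y z k := by
          rw [_root_.tsum_mul_left]
          gcongr
  rw [dyadicPoissonKernel_eq, dyadicPoissonKernel_eq, mul_left_comm]
  exact mul_le_mul_of_nonneg_left hseries (Real.rpow_nonneg (dist_nonneg.trans hd.le) _)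

theorem dyadicPoissonKernel_pos (hQ : -1 < Q) (hy : 0 < y) : 0 < dyadicPoissonKernel Q x y z := by
  obtain ⟨k, hk⟩ := pow_unbounded_of_one_lt (dist z x / y) one_lt_two
  have hz : z ∈ Metric.ball x (2 ^ k * y) := by
    rw [Metric.mem_ball, ← div_lt_iff₀ hy]
    exact hk
  have hterm : 0 < dyadicTerm Q x y z k := by
    rw [dyadicTerm, Set.indicator_of_mem hz, mul_one]
    positivity
  exact mul_pos (by positivity)
    (hterm.trans_le ((summable_dyadicTerm hQ).le_tsum k fun j _ => dyadicTerm_nonneg j))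

theorem measurable_dyadicPoissonKernel [MeasurableSpace X] [OpensMeasurableSpace X] :
    Measurable (dyadicPoissonKernel Q x y) :=
  (Measurable.tsum fun _ =>
    (measurable_const.indicator Metric.isOpen_ball.measurableSet).const_mul _).const_mul _

end DyadicPoissonKernel

theorem mul_PI_le_PI_of_dist_lt {X : Type*} [MetricSpace X] [MeasurableSpace X]
    [OpensMeasurableSpace X] (m : Measure X) {Q y : ℝ} {g : X → ℝ} {x x' : X}
    (hQ : -1 < Q) (hg : ∀ z, 0 ≤ g z) (hd : dist x x' < y) :
    (2 ^ (Q + 1))⁻¹ * (2 ^ (Q + 1))⁻¹ * PI m Q g x' y ≤ PI m Q g x y :=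
  have hy : 0 < y := dist_nonneg.trans_lt hd
  weighted_average_le_of_comparable measurable_dyadicPoissonKernel
    measurable_dyadicPoissonKernel (by positivity) (fun _ => dyadicPoissonKernel_pos hQ hy) hg
    (fun _ => dyadicPoissonKernel_le_of_dist_lt hQ (dist_comm x x' ▸ hd))
    (fun _ => dyadicPoissonKernel_le_of_dist_lt hQ hd)

theorem potential_nonneg {X : Type*} [MeasurableSpace X] (m : Measure X) {K : X → X → ℝ}
    {f : X → ℝ} (hK : ∀ x y, 0 ≤ K x y) (hf : ∀ z, 0 ≤ f z) (x : X) :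
    0 ≤ potential m K f x :=
  integral_nonneg fun y => mul_nonneg (hK x y) (hf y)

theorem rieszKernel_nonneg_s9 {X : Type*} [MetricSpace X] (Q s : ℝ) (x y : X) :
    0 ≤ rieszKernel Q s x y :=
  Real.rpow_nonneg dist_nonneg _

theorem harnack_type_inequality_poisson_general
    {X : Type*} [MetricSpace X] [MeasurableSpace X] [BorelSpace X]
    (m : Measure X) (Q : ℝ) (hQ : 0 < Q)
    (p s : ℝ) :
    ∃ c : ℝ, 0 < c ∧
      ∀ f : X → ℝ, MemLp f (ENNReal.ofReal p) m → (∀ z, 0 ≤ f z) →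
        ∀ ε : ℝ, 0 < ε →
          ∀ (x : X) (y : ℝ), 0 < y →
            (∃ x' : X, ε < PI m Q (potential m (rieszKernel Q s) f) x' y ∧
              x ∈ Metric.ball x' y) →
            c * ε ≤ PI m Q (potential m (rieszKernel Q s) f) x y := by
  refine ⟨(2 ^ (Q + 1))⁻¹ * (2 ^ (Q + 1))⁻¹, by positivity, ?_⟩
  rintro f - hf ε - x y - ⟨x', hε, hx⟩
  have hg := potential_nonneg m (rieszKernel_nonneg_s9 Q s) hf
  calc (2 ^ (Q + 1))⁻¹ * (2 ^ (Q + 1))⁻¹ * ε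
      ≤ (2 ^ (Q + 1))⁻¹ * (2 ^ (Q + 1))⁻¹ * PI m Q (potential m (rieszKernel Q s) f) x' y := by
        gcongr
    _ ≤ PI m Q (potential m (rieszKernel Q s) f) x y :=
        mul_PI_le_PI_of_dist_lt m (by linarith) hg (Metric.mem_ball.1 hx)

/-- **Harnack-type inequality for the dyadic Poisson integral of a Riesz
potential.**  On a compact Ahlfors `Q`-regular space there is `c > 0`, depending
only on `X` and `Q`, such that for every nonnegative `f ∈ L^p(X,m)` and `ε > 0`:
if `(x,y)` lies in `E'(f,ε) = ⋃_{(x',y)∈E(f,ε)} B(x',y) × {y}`, where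
`E(f,ε) = {(x',y) : PI(K_{X,s}*f)(x',y) > ε}`, then
`PI(K_{X,s}*f)(x,y) ≥ c ε`. -/
theorem harnack_type_inequality_poisson
    {X : Type*} [MetricSpace X] [CompactSpace X] [MeasurableSpace X] [BorelSpace X]
    (m : Measure X) (Q : ℝ) (hQ : 0 < Q) (hAhl : IsAhlfors m Q)
    (p p' s : ℝ) (hp : 1 < p) (hp' : 1 / p + 1 / p' = 1)
    (hs1 : 1 / p' ≤ s) (hs2 : s < 1) :
    ∃ c : ℝ, 0 < c ∧
      ∀ f : X → ℝ, MemLp f (ENNReal.ofReal p) m → (∀ z, 0 ≤ f z) →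
        ∀ ε : ℝ, 0 < ε →
          ∀ (x : X) (y : ℝ), 0 < y →
            (∃ x' : X, ε < PI m Q (potential m (rieszKernel Q s) f) x' y ∧
              x ∈ Metric.ball x' y) →
            c * ε ≤ PI m Q (potential m (rieszKernel Q s) f) x y :=
  harnack_type_inequality_poisson_general m Q hQ p s

end
end
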